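/- arXiv:1702.06396 — 5 statements merged into one kernel-verified Lean document; each statement's English description precedes it below -/
import Mathlib

section
/- Let $(\lambda_i)_{i\ge1}$ be nonnegative reals with $0 < \sum_i \lambda_i < \infty$, let $Z_i \sim \mathrm{Exp}(\lambda_i)$ be independent, let $W(t) := \sum_i \mathbf{1}[Z_i \le t]$, and let $L := |\{i : \lambda_i > 0\}| \le \infty$. Then as $t \to \infty$: $\mathbb{E} W(t) \to L$, $W(t) \to L$ almost surely, and $W(t)/\mathbb{E} W(t) \to 1$ almost surely. -/
/-!
Write `N t` for the number of `i` with `Z i ≤ t`. The indicator of `{Z i ≤ t}` increases to that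
of `{Z i < ∞}`, and `Z i < ∞` almost surely exactly when `λ i > 0`; monotone convergence, for sums
and for expectations, gives `E N t → L` and `N t → L` almost surely. For `L < ∞` the ratio then
tends to `L / L = 1`, since some `λ i` is positive.

For `L = ∞` the mean `m t = ∑ (1 - exp (-λ i t))` is finite, continuous and unbounded, so there
are times `u k` with `m (u k) = (k + 1) ^ 2`. As `N t` is a sum of independent indicators, its
variance is at most `m t`, and Chebyshev's inequality bounds the probability of a relative
deviation `ε` at time `u k` by `4 / (ε ^ 2 (k + 1) ^ 2)`, which is summable; by Borel–Cantelli
`N (u k) / m (u k) → 1` almost surely. Since `N` and `m` are nondecreasing and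
`m (u (k + 1)) / m (u k) → 1`, the convergence extends to all `t`.
-/

open MeasureTheory ProbabilityTheory Filter Set Topology
open scoped ENNReal

theorem ENNReal.tendsto_tsum_atTop_of_monotone {α ι : Type*} [Preorder ι] [IsDirectedOrder ι]
    [Nonempty ι] {f : α → ι → ℝ≥0∞} {g : α → ℝ≥0∞} (hf : ∀ a, Monotone (f a))
    (hg : ∀ a, Tendsto (f a) atTop (𝓝 (g a))) :
    Tendsto (fun i => ∑' a, f a i) atTop (𝓝 (∑' a, g a)) := by
  have hg_eq : ∀ a, g a = ⨆ i, f a i := fun a =>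
    tendsto_nhds_unique (hg a) (tendsto_atTop_iSup (hf a))
  have hsum : ∑' a, g a = ⨆ i, ∑' a, f a i := by
    simp_rw [hg_eq, ENNReal.tsum_eq_iSup_sum,
      fun s : Finset α => ENNReal.finsetSum_iSup_of_monotone (s := s) hf]
    exact iSup_comm
  rw [hsum]
  exact tendsto_atTop_iSup fun i j hij => ENNReal.tsum_le_tsum fun a => hf a hij

theorem tendsto_of_forall_eventually_mem_Icc {α β : Type*} [TopologicalSpace α] [LinearOrder α]
    [OrderTopology α] {l : Filter β} {r : β → α} {lo hi : ℕ → α} {x : α}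
    (hlo : Tendsto lo atTop (𝓝 x)) (hhi : Tendsto hi atTop (𝓝 x))
    (h : ∀ j, ∀ᶠ k in l, r k ∈ Icc (lo j) (hi j)) : Tendsto r l (𝓝 x) := by
  refine tendsto_order.2 ⟨fun b hb => ?_, fun b hb => ?_⟩
  · obtain ⟨j, hj⟩ := (hlo.eventually (lt_mem_nhds hb)).exists
    exact (h j).mono fun k hk => hj.trans_le hk.1
  · obtain ⟨j, hj⟩ := (hhi.eventually (gt_mem_nhds hb)).exists
    exact (h j).mono fun k hk => hk.2.trans_lt hj

theorem exists_index_le_lt_succ {α : Type*} [LinearOrder α] [NoMaxOrder α] {u : ℕ → α}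
    (hu_top : Tendsto u atTop atTop) {t : α} (ht : u 0 ≤ t) : ∃ k, u k ≤ t ∧ t < u (k + 1) := by
  have hex : ∃ n, t < u n := (hu_top.eventually_gt_atTop t).exists
  have hpos : Nat.find hex ≠ 0 := fun h => (h ▸ Nat.find_spec hex).not_ge ht
  refine ⟨Nat.find hex - 1, not_lt.1 (Nat.find_min hex (by omega)), ?_⟩
  rw [Nat.sub_add_cancel (Nat.one_le_iff_ne_zero.2 hpos)]
  exact Nat.find_spec hex

theorem tendsto_atTop_of_monotone_of_tendsto_top {α : Type*} [LinearOrder α] {g : α → ℝ≥0∞}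
    (hg : Monotone g) (hg_ne_top : ∀ t, g t ≠ ∞) {u : ℕ → α}
    (hgu : Tendsto (fun k => g (u k)) atTop (𝓝 ∞)) : Tendsto u atTop atTop :=
  tendsto_atTop.2 fun b =>
    (hgu.eventually (lt_mem_nhds (hg_ne_top b).lt_top)).mono fun _ hk => (hg.reflect_lt hk).le

theorem measure_setOf_eventually_mem_le {α : Type*} [MeasurableSpace α] {μ : Measure α}
    {B : ℕ → Set α} {C : ℝ≥0∞} (hB : ∀ n, μ (B n) ≤ C) : μ {x | ∀ᶠ n in atTop, x ∈ B n} ≤ C := by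
  have hunion : {x | ∀ᶠ n in atTop, x ∈ B n} = ⋃ N, {x | ∀ n ≥ N, x ∈ B n} := by
    ext x
    simp [eventually_atTop]
  rw [hunion, Monotone.measure_iUnion (s := fun N => {x | ∀ n ≥ N, x ∈ B n})
    fun N N' h x (hx : ∀ n ≥ N, x ∈ B n) n hn => hx n (h.trans hn)]
  exact iSup_le fun N => (measure_mono fun x (hx : ∀ n ≥ N, x ∈ B n) => hx N le_rfl).trans (hB N)

theorem ENNReal.div_mul_div_cancel {a b c : ℝ≥0∞} (hb₀ : b ≠ 0) (hb : b ≠ ∞) :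
    a / b * (b / c) = a / c := by
  rw [div_eq_mul_inv, div_eq_mul_inv, mul_assoc, ← mul_assoc b⁻¹, ENNReal.inv_mul_cancel hb₀ hb,
    one_mul, div_eq_mul_inv]

theorem ENNReal.div_ofReal_mem_Icc_of_mem_Icc {x : ℝ≥0∞} {a ε : ℝ} (ha : 0 < a)
    (hx : x ∈ Icc (ENNReal.ofReal (a - ε * a)) (ENNReal.ofReal (a + ε * a))) :
    x / ENNReal.ofReal a ∈ Icc (ENNReal.ofReal (1 - ε)) (ENNReal.ofReal (1 + ε)) := by
  have hdiv : ∀ b : ℝ, ENNReal.ofReal (b * a) / ENNReal.ofReal a = ENNReal.ofReal b := fun b => by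
    rw [← ENNReal.ofReal_div_of_pos ha, mul_div_cancel_right₀ b ha.ne']
  rw [← hdiv (1 - ε), ← hdiv (1 + ε)]
  rw [← one_sub_mul, ← one_add_mul] at hx
  exact ⟨ENNReal.div_le_div_right hx.1 _, ENNReal.div_le_div_right hx.2 _⟩

theorem tendsto_ofReal_add_two_sq_div_add_one_sq :
    Tendsto (fun k : ℕ => ENNReal.ofReal (((k : ℝ) + 2) ^ 2) / ENNReal.ofReal (((k : ℝ) + 1) ^ 2))
      atTop (𝓝 1) := by
  have h : Tendsto (fun k : ℕ => (1 + 1 / ((k : ℝ) + 1)) ^ 2) atTop (𝓝 1) := by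
    simpa using ((tendsto_const_nhds (x := (1 : ℝ))).add
      tendsto_one_div_add_atTop_nhds_zero_nat).pow 2
  have h' := ENNReal.tendsto_ofReal h
  rw [ENNReal.ofReal_one] at h'
  refine h'.congr fun k => ?_
  rw [← ENNReal.ofReal_div_of_pos (by positivity)]
  congr 1
  field_simp
  ring

theorem ENNReal.tendsto_div_of_tendsto_comp {α : Type*} [LinearOrder α] [NoMaxOrder α]
    {f g : α → ℝ≥0∞} (hf : Monotone f) (hg : Monotone g) {u : ℕ → α} (hu : Monotone u)
    (hu_top : Tendsto u atTop atTop) (hg_ne_zero : ∀ k, g (u k) ≠ 0)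
    (hg_ne_top : ∀ k, g (u k) ≠ ∞) (hfg : Tendsto (fun k => f (u k) / g (u k)) atTop (𝓝 1))
    (hg_succ : Tendsto (fun k => g (u (k + 1)) / g (u k)) atTop (𝓝 1)) :
    Tendsto (fun t => f t / g t) atTop (𝓝 1) := by
  have hg_succ' : Tendsto (fun k => g (u k) / g (u (k + 1))) atTop (𝓝 1) := by
    simpa only [inv_one, ENNReal.inv_div (.inl (hg_ne_top _)) (.inl (hg_ne_zero _))]
      using hg_succ.inv
  have hlo : Tendsto (fun k => f (u k) / g (u (k + 1))) atTop (𝓝 1) := by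
    have := ENNReal.Tendsto.mul hfg (by simp) hg_succ' (by simp)
    simpa only [mul_one, ENNReal.div_mul_div_cancel (hg_ne_zero _) (hg_ne_top _)] using this
  have hhi : Tendsto (fun k => f (u (k + 1)) / g (u k)) atTop (𝓝 1) := by
    have := ENNReal.Tendsto.mul (hfg.comp (tendsto_add_atTop_nat 1)) (by simp) hg_succ (by simp)
    simpa only [mul_one, Function.comp_def,
      ENNReal.div_mul_div_cancel (hg_ne_zero _) (hg_ne_top _)] using this
  -- For `t ∈ [u (κ t), u (κ t + 1))`, monotonicity squeezes `f t / g t` between `hlo` and `hhi`.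
  choose κ hκ using fun t => exists_index_le_lt_succ hu_top (le_max_right t (u 0))
  have hκ_top : Tendsto κ atTop atTop := by
    refine tendsto_atTop.2 fun K => (eventually_ge_atTop (u K)).mono fun t ht => ?_
    have : u K < u (κ t + 1) := (ht.trans (le_max_left _ _)).trans_lt (hκ t).2
    exact Nat.lt_succ_iff.1 (hu.reflect_lt this)
  refine tendsto_of_tendsto_of_tendsto_of_le_of_le' (hlo.comp hκ_top) (hhi.comp hκ_top) ?_ ?_ <;>
    filter_upwards [eventually_ge_atTop (u 0)] with t ht <;>
    obtain ⟨hk₁, hk₂⟩ := max_eq_left ht ▸ hκ t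
  · exact ENNReal.div_le_div (hf hk₁) (hg hk₂.le)
  · exact ENNReal.div_le_div (hf hk₂.le) (hg hk₁)

theorem ProbabilityTheory.iIndepFun.iIndepSet_preimage {Ω ι β : Type*} [MeasurableSpace Ω]
    [MeasurableSpace β] {P : Measure Ω} {Z : ι → Ω → β} (h : iIndepFun Z P) {S : Set β}
    (hS : MeasurableSet S) : iIndepSet (fun i => Z i ⁻¹' S) P :=
  iIndep_comap_mem_iff.1 (h.comp (fun _ x => x ∈ S) fun _ => measurable_mem.2 hS)

section EventCount

variable {Ω : Type*}

noncomputable def eventCount (A : ℕ → Set Ω) (ω : Ω) : ℝ≥0∞ := ∑' i, (A i).indicator 1 ω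

theorem eventCount_eq_iSup (A : ℕ → Set Ω) (ω : Ω) :
    eventCount A ω =
      ⨆ n, ENNReal.ofReal (∑ i ∈ Finset.range n, (A i).indicator (1 : Ω → ℝ) ω) := by
  rw [eventCount, ENNReal.tsum_eq_iSup_nat]
  congr 1 with n
  rw [ENNReal.ofReal_sum_of_nonneg (f := fun i => (A i).indicator (1 : Ω → ℝ) ω)
    fun i _ => indicator_nonneg (fun _ _ => zero_le_one) _]
  refine Finset.sum_congr rfl fun i _ => ?_
  by_cases h : ω ∈ A i <;> simp [h]

theorem tendsto_eventCount_atTop_of_monotone {ι : Type*} [Preorder ι] [IsDirectedOrder ι]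
    [Nonempty ι] {A : ι → ℕ → Set Ω} (hA : ∀ i, Monotone fun t => A t i) (ω : Ω) :
    Tendsto (fun t => eventCount (A t) ω) atTop (𝓝 (eventCount (fun i => ⋃ t, A t i) ω)) := by
  refine ENNReal.tendsto_tsum_atTop_of_monotone
    (fun i t t' h => indicator_le_indicator_of_subset (hA i h) (fun _ => zero_le) ω) fun i => ?_
  refine (tendsto_indicator_const_apply_iff_eventually _ (1 : ℝ≥0∞) ω).2 ?_
  by_cases hω : ω ∈ ⋃ t, A t i
  · obtain ⟨t₀, ht₀⟩ := mem_iUnion.1 hω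
    exact (eventually_ge_atTop t₀).mono fun t ht => iff_of_true (hA i ht ht₀) hω
  · exact Eventually.of_forall fun t => iff_of_false (fun h => hω (mem_iUnion.2 ⟨t, h⟩)) hω

-- The partial sums increase to `eventCount A ω`, and their means to `m`.
theorem eventually_half_le_abs_sum_indicator_sub {A : ℕ → Set Ω} {p : ℕ → ℝ} {m : ℝ}
    (hp : ∀ i, 0 ≤ p i) (hm : HasSum p m) {c : ℝ} (hc : 0 < c) {ω : Ω}
    (hω : eventCount A ω ∉ Icc (ENNReal.ofReal (m - c)) (ENNReal.ofReal (m + c))) :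
    ∀ᶠ n in atTop,
      c / 2 ≤ |∑ i ∈ Finset.range n, (A i).indicator 1 ω - ∑ i ∈ Finset.range n, p i| := by
  set S : ℕ → ℝ := fun n => ∑ i ∈ Finset.range n, (A i).indicator 1 ω
  have hS_mono : Monotone S := fun n n' h =>
    Finset.sum_le_sum_of_subset_of_nonneg (Finset.range_subset_range.2 h)
      fun i _ _ => indicator_nonneg (fun _ _ => zero_le_one) _
  have hs_le : ∀ n, ∑ i ∈ Finset.range n, p i ≤ m := fun n => sum_le_hasSum _ (fun i _ => hp i) hm
  simp only [mem_Icc, not_and_or, not_le] at hω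
  rcases hω with hlo | hhi
  · filter_upwards [hm.tendsto_sum_nat.eventually (lt_mem_nhds (by linarith : m - c / 2 < m))]
      with n hn
    have hSn : S n < m - c := by
      refine (ENNReal.ofReal_lt_ofReal_iff'.1 (lt_of_le_of_lt ?_ hlo)).1
      rw [eventCount_eq_iSup]
      exact le_iSup (fun n => ENNReal.ofReal (S n)) n
    rw [abs_sub_comm]
    exact le_abs.2 (.inl (by linarith))
  · rw [eventCount_eq_iSup, lt_iSup_iff] at hhi
    obtain ⟨n₀, hn₀⟩ := hhi
    have hSn₀ : m + c < S n₀ := (ENNReal.ofReal_lt_ofReal_iff'.1 hn₀).1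
    filter_upwards [eventually_ge_atTop n₀] with n hn
    exact le_abs.2 (.inl (by linarith [hS_mono hn, hs_le n]))

variable [MeasurableSpace Ω] {P : Measure Ω}

theorem lintegral_eventCount {A : ℕ → Set Ω} (hA : ∀ i, MeasurableSet (A i)) :
    ∫⁻ ω, eventCount A ω ∂P = ∑' i, P (A i) := by
  simp only [eventCount]
  rw [lintegral_tsum fun i => (measurable_one.indicator (hA i)).aemeasurable]
  exact tsum_congr fun i => lintegral_indicator_one (hA i)

theorem tendsto_lintegral_eventCount_atTop_of_monotone {ι : Type*} [Preorder ι]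
    [IsDirectedOrder ι] [Nonempty ι] [IsCountablyGenerated (atTop : Filter ι)]
    {A : ι → ℕ → Set Ω} (hAm : ∀ t i, MeasurableSet (A t i)) (hA : ∀ i, Monotone fun t => A t i) :
    Tendsto (fun t => ∫⁻ ω, eventCount (A t) ω ∂P) atTop (𝓝 (∑' i, P (⋃ t, A t i))) := by
  simp_rw [lintegral_eventCount (hAm _)]
  exact ENNReal.tendsto_tsum_atTop_of_monotone (fun i t t' h => measure_mono (hA i h))
    fun i => tendsto_measure_iUnion_atTop (hA i)

variable [IsProbabilityMeasure P]

theorem variance_indicator_one_le {A : Set Ω} (hA : MeasurableSet A) :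
    variance (A.indicator 1) P ≤ P.real A := by
  have hsq : A.indicator (1 : Ω → ℝ) ^ 2 = A.indicator 1 := by
    ext ω
    by_cases h : ω ∈ A <;> simp [h]
  have := variance_le_expectation_sq (μ := P) (measurable_one.indicator hA).aestronglyMeasurable
  rwa [hsq, integral_indicator_one hA] at this

theorem variance_sum_indicator_one_le {A : ℕ → Set Ω} (hA : ∀ i, MeasurableSet (A i))
    (hind : iIndepSet A P) (s : Finset ℕ) :
    variance (fun ω => ∑ i ∈ s, (A i).indicator 1 ω) P ≤ ∑ i ∈ s, P.real (A i) := by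
  have hmem : ∀ i, MemLp ((A i).indicator (1 : Ω → ℝ)) 2 P := fun i =>
    (memLp_const 1).indicator (hA i)
  rw [← Finset.sum_fn, IndepFun.variance_sum (fun i _ => hmem i)
    fun i _ j _ hij => hind.iIndepFun_indicator.indepFun hij]
  exact Finset.sum_le_sum fun i _ => variance_indicator_one_le (hA i)

theorem measure_le_abs_sum_indicator_sub_le {A : ℕ → Set Ω} (hA : ∀ i, MeasurableSet (A i))
    (hind : iIndepSet A P) (s : Finset ℕ) {c : ℝ} (hc : 0 < c) :
    P {ω | c ≤ |∑ i ∈ s, (A i).indicator 1 ω - ∑ i ∈ s, P.real (A i)|} ≤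
      ENNReal.ofReal ((∑ i ∈ s, P.real (A i)) / c ^ 2) := by
  have hmean : P[fun ω => ∑ i ∈ s, (A i).indicator (1 : Ω → ℝ) ω] = ∑ i ∈ s, P.real (A i) := by
    rw [integral_finsetSum _ fun i _ => (integrable_const 1).indicator (hA i)]
    exact Finset.sum_congr rfl fun i _ => integral_indicator_one (hA i)
  have hS : MemLp (fun ω => ∑ i ∈ s, (A i).indicator (1 : Ω → ℝ) ω) 2 P :=
    memLp_finsetSum _ fun i _ => (memLp_const 1).indicator (hA i)
  calc _ ≤ ENNReal.ofReal (variance (fun ω => ∑ i ∈ s, (A i).indicator 1 ω) P / c ^ 2) := by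
        simpa only [hmean] using meas_ge_le_variance_div_sq hS hc
    _ ≤ _ := by
        gcongr
        exact variance_sum_indicator_one_le hA hind s

theorem measure_eventCount_notMem_Icc_le {A : ℕ → Set Ω} (hA : ∀ i, MeasurableSet (A i))
    (hind : iIndepSet A P) {m : ℝ} (hm : HasSum (fun i => P.real (A i)) m) {c : ℝ} (hc : 0 < c) :
    P {ω | eventCount A ω ∉ Icc (ENNReal.ofReal (m - c)) (ENNReal.ofReal (m + c))} ≤
      ENNReal.ofReal (4 * m / c ^ 2) := by
  have hB : ∀ n, P {ω | c / 2 ≤ |∑ i ∈ Finset.range n, (A i).indicator 1 ω -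
      ∑ i ∈ Finset.range n, P.real (A i)|} ≤ ENNReal.ofReal (4 * m / c ^ 2) := fun n =>
    calc _ ≤ ENNReal.ofReal ((∑ i ∈ Finset.range n, P.real (A i)) / (c / 2) ^ 2) :=
          measure_le_abs_sum_indicator_sub_le hA hind _ (half_pos hc)
      _ ≤ ENNReal.ofReal (m / (c / 2) ^ 2) := by
          gcongr
          exact sum_le_hasSum _ (fun i _ => measureReal_nonneg) hm
      _ = ENNReal.ofReal (4 * m / c ^ 2) := by ring_nf
  exact (measure_mono fun ω hω => eventually_half_le_abs_sum_indicator_sub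
    (fun i => measureReal_nonneg) hm hc hω).trans (measure_setOf_eventually_mem_le hB)

theorem ae_tendsto_eventCount_div {A : ℕ → ℕ → Set Ω} (hA : ∀ k i, MeasurableSet (A k i))
    (hind : ∀ k, iIndepSet (A k) P) {a : ℕ → ℝ} (ha : ∀ k, HasSum (fun i => P.real (A k i)) (a k))
    (ha_pos : ∀ k, 0 < a k) (ha_inv : Summable fun k => (a k)⁻¹) :
    ∀ᵐ ω ∂P, Tendsto (fun k => eventCount (A k) ω / ENNReal.ofReal (a k)) atTop (𝓝 1) := by
  set ε : ℕ → ℝ := fun j => 1 / (j + 1)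
  have hclose : ∀ j, ∀ᵐ ω ∂P, ∀ᶠ k in atTop, eventCount (A k) ω ∈
      Icc (ENNReal.ofReal (a k - ε j * a k)) (ENNReal.ofReal (a k + ε j * a k)) := by
    intro j
    have hεj : 0 < ε j := Nat.one_div_pos_of_nat
    have hbound : ∀ k, P {ω | eventCount (A k) ω ∉
        Icc (ENNReal.ofReal (a k - ε j * a k)) (ENNReal.ofReal (a k + ε j * a k))} ≤
        ENNReal.ofReal (4 / ε j ^ 2 * (a k)⁻¹) := fun k => by
      refine (measure_eventCount_notMem_Icc_le (hA k) (hind k) (ha k)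
        (mul_pos hεj (ha_pos k))).trans_eq ?_
      congr 1
      field_simp
    have hsum : ∑' k, P {ω | eventCount (A k) ω ∉
        Icc (ENNReal.ofReal (a k - ε j * a k)) (ENNReal.ofReal (a k + ε j * a k))} ≠ ∞ := by
      refine ne_top_of_le_ne_top ?_ (ENNReal.tsum_le_tsum hbound)
      rw [← ENNReal.ofReal_tsum_of_nonneg (fun k => by have := ha_pos k; positivity)
        (ha_inv.mul_left _)]
      exact ENNReal.ofReal_ne_top
    filter_upwards [ae_eventually_notMem hsum] with ω hω
    exact hω.mono fun k hk => not_not.1 hk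
  have hε : Tendsto ε atTop (𝓝 0) := tendsto_one_div_add_atTop_nhds_zero_nat
  filter_upwards [ae_all_iff.2 hclose] with ω hω
  refine tendsto_of_forall_eventually_mem_Icc (lo := fun j => ENNReal.ofReal (1 - ε j))
    (hi := fun j => ENNReal.ofReal (1 + ε j)) ?_ ?_
    fun j => (hω j).mono fun k hk => ENNReal.div_ofReal_mem_Icc_of_mem_Icc (ha_pos k) hk
  · simpa using ENNReal.tendsto_ofReal ((tendsto_const_nhds (x := (1 : ℝ))).sub hε)
  · simpa using ENNReal.tendsto_ofReal ((tendsto_const_nhds (x := (1 : ℝ))).add hε)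

end EventCount

section Exponential

theorem tendsto_ofReal_one_sub_exp {l : ℝ} (hl : 0 ≤ l) :
    Tendsto (fun t => ENNReal.ofReal (1 - Real.exp (-l * t))) atTop
      (𝓝 (if 0 < l then 1 else 0)) := by
  rcases hl.lt_or_eq with hl | rfl
  · have hexp : Tendsto (fun t => Real.exp (-l * t)) atTop (𝓝 0) :=
      Real.tendsto_exp_atBot.comp (tendsto_id.const_mul_atTop_of_neg (neg_neg_of_pos hl))
    simpa [hl] using ENNReal.tendsto_ofReal ((tendsto_const_nhds (x := (1 : ℝ))).sub hexp)
  · simp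

theorem one_sub_exp_neg_mul_nonneg {l t : ℝ} (hl : 0 ≤ l) (ht : 0 ≤ t) :
    0 ≤ 1 - Real.exp (-l * t) := by
  rw [sub_nonneg, Real.exp_le_one_iff]
  nlinarith

theorem one_sub_exp_neg_mul_le (l t : ℝ) : 1 - Real.exp (-l * t) ≤ l * t := by
  linarith [Real.add_one_le_exp (-l * t)]

variable {lam : ℕ → ℝ}

theorem summable_one_sub_exp_neg_mul (hlam : ∀ i, 0 ≤ lam i) (hsum : Summable lam) {t : ℝ}
    (ht : 0 ≤ t) : Summable fun i => 1 - Real.exp (-lam i * t) :=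
  (hsum.mul_right t).of_nonneg_of_le (fun i => one_sub_exp_neg_mul_nonneg (hlam i) ht)
    fun _ => one_sub_exp_neg_mul_le _ _

theorem continuousOn_tsum_one_sub_exp_neg_mul (hlam : ∀ i, 0 ≤ lam i) (hsum : Summable lam) :
    ContinuousOn (fun t => ∑' i, (1 - Real.exp (-lam i * t))) (Ici 0) := by
  have hIcc : ∀ T, ContinuousOn (fun t => ∑' i, (1 - Real.exp (-lam i * t))) (Icc 0 T) := by
    refine fun T => continuousOn_tsum (fun _ => by fun_prop) (hsum.mul_right T) fun i t ht => ?_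
    rw [Real.norm_of_nonneg (one_sub_exp_neg_mul_nonneg (hlam i) ht.1)]
    exact (one_sub_exp_neg_mul_le _ _).trans (mul_le_mul_of_nonneg_left ht.2 (hlam i))
  refine continuousOn_of_locally_continuousOn fun t _ => ⟨Iio (t + 1), isOpen_Iio, by simp, ?_⟩
  exact (hIcc (t + 1)).mono fun s hs => ⟨hs.1, le_of_lt hs.2⟩

end Exponential

section Arrivals

variable {Ω : Type*}

noncomputable def arrivalCount (Z : ℕ → Ω → ℝ≥0∞) (t : ℝ) : Ω → ℝ≥0∞ :=
  eventCount fun i => {ω | Z i ω ≤ ENNReal.ofReal t}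

theorem monotone_setOf_le_ofReal (X : Ω → ℝ≥0∞) :
    Monotone fun t : ℝ => {ω | X ω ≤ ENNReal.ofReal t} :=
  fun _ _ h _ hω => le_trans hω (ENNReal.ofReal_le_ofReal h)

theorem iUnion_setOf_le_ofReal (X : Ω → ℝ≥0∞) :
    ⋃ t : ℝ, {ω | X ω ≤ ENNReal.ofReal t} = {ω | X ω ≠ ∞} := by
  ext ω
  simp only [mem_iUnion, mem_ofPred_eq]
  refine ⟨fun ⟨t, ht⟩ => ne_top_of_le_ne_top ENNReal.ofReal_ne_top ht,
    fun h => ⟨(X ω).toReal, ?_⟩⟩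
  rw [ENNReal.ofReal_toReal h]

theorem monotone_arrivalCount (Z : ℕ → Ω → ℝ≥0∞) (ω : Ω) :
    Monotone fun t => arrivalCount Z t ω :=
  fun _ _ h => ENNReal.tsum_le_tsum fun i =>
    indicator_le_indicator_of_subset (monotone_setOf_le_ofReal (Z i) h) (fun _ => zero_le) ω

variable [MeasurableSpace Ω] {P : Measure Ω}

theorem measure_ne_top_of_exp {X : Ω → ℝ≥0∞} {l : ℝ} (hl : 0 ≤ l)
    (hX : ∀ t : ℝ, 0 ≤ t →
      P {ω | X ω ≤ ENNReal.ofReal t} = ENNReal.ofReal (1 - Real.exp (-l * t))) :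
    P {ω | X ω ≠ ∞} = if 0 < l then 1 else 0 := by
  rw [← iUnion_setOf_le_ofReal]
  refine tendsto_nhds_unique (tendsto_measure_iUnion_atTop (monotone_setOf_le_ofReal X))
    ((tendsto_ofReal_one_sub_exp hl).congr' ?_)
  filter_upwards [eventually_ge_atTop 0] with t ht using (hX t ht).symm

theorem ae_ne_top_iff_of_exp [IsProbabilityMeasure P] {X : Ω → ℝ≥0∞} (hXm : Measurable X)
    {l : ℝ} (hl : 0 ≤ l)
    (hX : ∀ t : ℝ, 0 ≤ t →
      P {ω | X ω ≤ ENNReal.ofReal t} = ENNReal.ofReal (1 - Real.exp (-l * t))) :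
    ∀ᵐ ω ∂P, (X ω ≠ ∞ ↔ 0 < l) := by
  have h := measure_ne_top_of_exp hl hX
  by_cases hpos : 0 < l
  · rw [if_pos hpos, ← measure_univ (μ := P)] at h
    have h' := (ae_iff_measure_eq (p := fun ω => X ω ≠ ∞)
      (hXm (measurableSet_singleton ∞).compl).nullMeasurableSet).2 h
    filter_upwards [h'] with ω hω using iff_of_true hω hpos
  · rw [if_neg hpos, measure_eq_zero_iff_ae_notMem] at h
    filter_upwards [h] with ω hω using iff_of_false hω hpos

variable {Z : ℕ → Ω → ℝ≥0∞} {lam : ℕ → ℝ}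

theorem tendsto_lintegral_arrivalCount (hmeas : ∀ i, Measurable (Z i)) (hlam : ∀ i, 0 ≤ lam i)
    (hdist : ∀ i, ∀ t : ℝ, 0 ≤ t →
      P {ω | Z i ω ≤ ENNReal.ofReal t} = ENNReal.ofReal (1 - Real.exp (-(lam i) * t))) :
    Tendsto (fun t => ∫⁻ ω, arrivalCount Z t ω ∂P) atTop
      (𝓝 (∑' i, if 0 < lam i then 1 else 0)) := by
  have h := tendsto_lintegral_eventCount_atTop_of_monotone (P := P)
    (A := fun t i => {ω | Z i ω ≤ ENNReal.ofReal t}) (fun t i => hmeas i measurableSet_Iic)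
    fun i => monotone_setOf_le_ofReal (Z i)
  simp_rw [iUnion_setOf_le_ofReal, measure_ne_top_of_exp (hlam _) (hdist _)] at h
  exact h

theorem ae_tendsto_arrivalCount [IsProbabilityMeasure P] (hmeas : ∀ i, Measurable (Z i))
    (hlam : ∀ i, 0 ≤ lam i)
    (hdist : ∀ i, ∀ t : ℝ, 0 ≤ t →
      P {ω | Z i ω ≤ ENNReal.ofReal t} = ENNReal.ofReal (1 - Real.exp (-(lam i) * t))) :
    ∀ᵐ ω ∂P, Tendsto (fun t => arrivalCount Z t ω) atTop
      (𝓝 (∑' i, if 0 < lam i then 1 else 0)) := by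
  filter_upwards [ae_all_iff.2 fun i => ae_ne_top_iff_of_exp (hmeas i) (hlam i) (hdist i)]
    with ω hω
  have h := tendsto_eventCount_atTop_of_monotone (fun i => monotone_setOf_le_ofReal (Z i)) ω
  simp_rw [iUnion_setOf_le_ofReal] at h
  have hL : (∑' i, if 0 < lam i then 1 else 0) = eventCount (fun i => {ω | Z i ω ≠ ∞}) ω :=
    tsum_congr fun i => by by_cases hi : 0 < lam i <;> simp [hi, hω i]
  rwa [hL]

theorem hasSum_measureReal_setOf_le_ofReal (hlam : ∀ i, 0 ≤ lam i) (hsum : Summable lam)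
    (hdist : ∀ i, ∀ t : ℝ, 0 ≤ t →
      P {ω | Z i ω ≤ ENNReal.ofReal t} = ENNReal.ofReal (1 - Real.exp (-(lam i) * t)))
    {t : ℝ} (ht : 0 ≤ t) :
    HasSum (fun i => P.real {ω | Z i ω ≤ ENNReal.ofReal t})
      (∑' i, (1 - Real.exp (-lam i * t))) := by
  have hreal : ∀ i, P.real {ω | Z i ω ≤ ENNReal.ofReal t} = 1 - Real.exp (-lam i * t) :=
    fun i => by
      rw [measureReal_def, hdist i t ht,
        ENNReal.toReal_ofReal (one_sub_exp_neg_mul_nonneg (hlam i) ht)]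
  simpa only [hreal] using (summable_one_sub_exp_neg_mul hlam hsum ht).hasSum

theorem lintegral_arrivalCount_eq_ofReal (hmeas : ∀ i, Measurable (Z i))
    (hlam : ∀ i, 0 ≤ lam i) (hsum : Summable lam)
    (hdist : ∀ i, ∀ t : ℝ, 0 ≤ t →
      P {ω | Z i ω ≤ ENNReal.ofReal t} = ENNReal.ofReal (1 - Real.exp (-(lam i) * t)))
    {t : ℝ} (ht : 0 ≤ t) :
    ∫⁻ ω, arrivalCount Z t ω ∂P = ENNReal.ofReal (∑' i, (1 - Real.exp (-lam i * t))) := by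
  rw [arrivalCount, lintegral_eventCount (A := fun i => {ω | Z i ω ≤ ENNReal.ofReal t})
      fun i => hmeas i measurableSet_Iic,
    ENNReal.ofReal_tsum_of_nonneg (fun i => one_sub_exp_neg_mul_nonneg (hlam i) ht)
      (summable_one_sub_exp_neg_mul hlam hsum ht)]
  exact tsum_congr fun i => hdist i t ht

theorem exists_tsum_one_sub_exp_neg_mul_eq_sq (hmeas : ∀ i, Measurable (Z i))
    (hlam : ∀ i, 0 ≤ lam i) (hsum : Summable lam)
    (hdist : ∀ i, ∀ t : ℝ, 0 ≤ t →
      P {ω | Z i ω ≤ ENNReal.ofReal t} = ENNReal.ofReal (1 - Real.exp (-(lam i) * t)))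
    (htop : Tendsto (fun t => ∫⁻ ω, arrivalCount Z t ω ∂P) atTop (𝓝 ∞)) :
    ∃ u : ℕ → ℝ, (∀ k, 0 ≤ u k) ∧
      ∀ k, ∑' i, (1 - Real.exp (-lam i * u k)) = ((k : ℝ) + 1) ^ 2 := by
  have hM_top : Tendsto (fun t => ∑' i, (1 - Real.exp (-lam i * t))) atTop atTop := by
    refine ENNReal.tendsto_ofReal_nhds_top.1 (htop.congr' ?_)
    filter_upwards [eventually_ge_atTop 0] with t ht
    exact lintegral_arrivalCount_eq_ofReal hmeas hlam hsum hdist ht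
  have hu : ∀ k : ℕ, ∃ t, 0 ≤ t ∧ ∑' i, (1 - Real.exp (-lam i * t)) = ((k : ℝ) + 1) ^ 2 :=
    fun k => intermediate_value_Ici (continuousOn_tsum_one_sub_exp_neg_mul hlam hsum) hM_top
      (by simp; positivity)
  choose u hu_nonneg huM using hu
  exact ⟨u, hu_nonneg, huM⟩

theorem ae_tendsto_arrivalCount_div_lintegral_of_tendsto_top [IsProbabilityMeasure P]
    (hmeas : ∀ i, Measurable (Z i)) (hindep : iIndepFun Z P) (hlam : ∀ i, 0 ≤ lam i)
    (hsum : Summable lam)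
    (hdist : ∀ i, ∀ t : ℝ, 0 ≤ t →
      P {ω | Z i ω ≤ ENNReal.ofReal t} = ENNReal.ofReal (1 - Real.exp (-(lam i) * t)))
    (htop : Tendsto (fun t => ∫⁻ ω, arrivalCount Z t ω ∂P) atTop (𝓝 ∞)) :
    ∀ᵐ ω ∂P,
      Tendsto (fun t => arrivalCount Z t ω / ∫⁻ ω', arrivalCount Z t ω' ∂P) atTop (𝓝 1) := by
  obtain ⟨u, hu_nonneg, huM⟩ :=
    exists_tsum_one_sub_exp_neg_mul_eq_sq hmeas hlam hsum hdist htop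
  set m : ℝ → ℝ≥0∞ := fun t => ∫⁻ ω, arrivalCount Z t ω ∂P
  have hmM : ∀ t, 0 ≤ t → m t = ENNReal.ofReal (∑' i, (1 - Real.exp (-lam i * t))) :=
    fun t ht => lintegral_arrivalCount_eq_ofReal hmeas hlam hsum hdist ht
  have hm_mono : Monotone m := fun s t h => lintegral_mono fun ω => monotone_arrivalCount Z ω h
  have hmu : ∀ k, m (u k) = ENNReal.ofReal (((k : ℝ) + 1) ^ 2) := fun k => by
    rw [hmM _ (hu_nonneg k), huM]
  have hu_mono : Monotone u := monotone_nat_of_le_succ fun k => (hm_mono.reflect_lt (by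
    rw [hmu, hmu, ENNReal.ofReal_lt_ofReal_iff (by positivity)]
    push_cast
    nlinarith [k.cast_nonneg (α := ℝ)])).le
  have hu_top : Tendsto u atTop atTop := by
    refine tendsto_atTop_of_monotone_of_tendsto_top hm_mono (fun t => ?_) ?_
    · exact ne_top_of_le_ne_top (by rw [hmM _ (le_max_right t 0)]; exact ENNReal.ofReal_ne_top)
        (hm_mono (le_max_left t 0))
    · simpa only [hmu, Function.comp_def] using ENNReal.tendsto_ofReal_nhds_top.2
        ((tendsto_pow_atTop two_ne_zero).comp
          (tendsto_atTop_add_const_right _ 1 tendsto_natCast_atTop_atTop))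
  have hBC := ae_tendsto_eventCount_div (P := P) (a := fun k => ((k : ℝ) + 1) ^ 2)
    (A := fun k i => {ω | Z i ω ≤ ENNReal.ofReal (u k)}) (fun k i => hmeas i measurableSet_Iic)
    (fun k => hindep.iIndepSet_preimage measurableSet_Iic)
    (fun k => huM k ▸ hasSum_measureReal_setOf_le_ofReal hlam hsum hdist (hu_nonneg k))
    (fun k => by positivity)
    (by simpa using (summable_nat_add_iff 1).2 (Real.summable_nat_pow_inv.2 one_lt_two))
  filter_upwards [hBC] with ω hω
  refine ENNReal.tendsto_div_of_tendsto_comp (g := m) (monotone_arrivalCount Z ω) hm_mono hu_mono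
    hu_top (fun k => by simp only [hmu]; simp; positivity) (fun k => by simp only [hmu]; simp)
    (by simp only [hmu]; exact hω) ?_
  simp only [hmu]
  convert tendsto_ofReal_add_two_sq_div_add_one_sq using 4
  push_cast
  ring

end Arrivals

/-- With `L = #{i : λᵢ > 0} ≤ ∞`, as `t → ∞`: `E W(t) → L`,
`W(t) → L` a.s., and `W(t)/E W(t) → 1` a.s. -/
theorem stmt4 {Ω : Type*} [MeasurableSpace Ω] (P : Measure Ω) [IsProbabilityMeasure P]
    (lam : ℕ → ℝ) (hlam : ∀ i, 0 ≤ lam i) (hsum : Summable lam)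
    (hpos : 0 < ∑' i, lam i)
    (Z : ℕ → Ω → ℝ≥0∞) (hmeas : ∀ i, Measurable (Z i))
    (hindep : iIndepFun Z P)
    (hdist : ∀ i, ∀ t : ℝ, 0 ≤ t →
      P {ω | Z i ω ≤ ENNReal.ofReal t} = ENNReal.ofReal (1 - Real.exp (-(lam i) * t)))
    (W : ℝ → Ω → ℝ≥0∞)
    (hW : ∀ t ω, W t ω = ∑' i, Set.indicator {ω' | Z i ω' ≤ ENNReal.ofReal t} (fun _ => (1:ℝ≥0∞)) ω)
    (L : ℝ≥0∞) (hL : L = ∑' i, if 0 < lam i then (1:ℝ≥0∞) else 0) :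
    Tendsto (fun t : ℝ => ∫⁻ ω, W t ω ∂P) atTop (nhds L) ∧
    (∀ᵐ ω ∂P, Tendsto (fun t : ℝ => W t ω) atTop (nhds L)) ∧
    (∀ᵐ ω ∂P, Tendsto (fun t : ℝ => W t ω / ∫⁻ ω', W t ω' ∂P) atTop (nhds 1)) := by
  obtain rfl : W = arrivalCount Z := funext₂ hW
  have hmean := tendsto_lintegral_arrivalCount (P := P) hmeas hlam hdist
  have hpath := ae_tendsto_arrivalCount hmeas hlam hdist
  rw [← hL] at hmean hpath
  refine ⟨hmean, hpath, ?_⟩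
  by_cases hL_top : L = ∞
  · exact ae_tendsto_arrivalCount_div_lintegral_of_tendsto_top hmeas hindep hlam hsum hdist
      (hL_top ▸ hmean)
  have hL_zero : L ≠ 0 := by
    obtain ⟨i, hi⟩ : ∃ i, 0 < lam i := by
      by_contra! h
      simp [le_antisymm (h _) (hlam _)] at hpos
    rw [hL]
    exact ne_of_gt (lt_of_lt_of_le (by simp [hi]) (ENNReal.le_tsum i))
  filter_upwards [hpath] with ω hω
  simpa [ENNReal.div_self hL_zero hL_top] using
    ENNReal.Tendsto.div hω (.inl hL_zero) hmean (.inl hL_top)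
end

section
/- Let $(I_{ij})_{i,j=1}^N$ (with $N \le \infty$) be a symmetric array of random indicator variables such that the family $\{I_{ij}\}_{i \le j}$ is independent. Let $I_i := \max_j I_{ij}$ and $W := \sum_i I_i$. Then $\mathrm{Var}(W) \le 2\, \mathbb{E} W$. -/
open MeasureTheory ProbabilityTheory
open scoped ENNReal

/-!
Write `B i = ⋃ j, A i j`, so that `E[W²] = ∑ᵢ ∑ⱼ P(Bᵢ ∩ Bⱼ)` and `E W = ∑ᵢ P(Bᵢ)`. For `i ≠ j`
split `Bᵢ = A i j ∪ Cᵢⱼ` with `Cᵢⱼ = ⋃_{k ≠ j} A i k = otherEdges A i j`. The event `Cᵢⱼ` only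
involves the pairs `{i, k}` with `k ≠ j`, none of which is one of the pairs `{j, l}` defining `Bⱼ`
(this needs `i ≠ j`), so `Cᵢⱼ` and `Bⱼ` are independent and
`P(Bᵢ ∩ Bⱼ) ≤ P(A i j \ Cᵢⱼ) + P(Bᵢ) P(Bⱼ)`. For fixed `i` the events `A i j \ Cᵢⱼ`
("`j` is the only partner of `i`") are disjoint subsets of `Bᵢ`, so summing over `j` costs at
most `P(Bᵢ)`, and the diagonal terms `P(Bᵢ ∩ Bᵢ)` contribute another `P(Bᵢ)`.
-/

theorem ENNReal.tsum_tsum_le_sq_add_two_mul {ι : Type*} (x d : ι → ι → ℝ≥0∞) (f : ι → ℝ≥0∞)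
    (hdiag : ∀ i, x i i ≤ f i) (hoff : ∀ i j, i ≠ j → x i j ≤ d i j + f i * f j)
    (hd : ∀ i, ∑' j, d i j ≤ f i) :
    ∑' i, ∑' j, x i j ≤ (∑' i, f i) ^ 2 + 2 * ∑' i, f i := by
  classical
  have hx : ∀ i j, x i j ≤ (if j = i then f i else 0) + d i j + f i * f j := by
    intro i j
    rcases eq_or_ne j i with rfl | hji
    · simpa [add_assoc] using le_add_right (hdiag j)
    · simpa [hji] using hoff i j hji.symm
  calc ∑' i, ∑' j, x i j
      ≤ ∑' i, ∑' j, ((if j = i then f i else 0) + d i j + f i * f j) :=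
        ENNReal.tsum_le_tsum fun i => ENNReal.tsum_le_tsum (hx i)
    _ = ∑' i, (f i + ∑' j, d i j + f i * ∑' j, f j) := by
        simp only [ENNReal.tsum_add, tsum_ite_eq, ENNReal.tsum_mul_left]
    _ ≤ ∑' i, (2 * f i + f i * ∑' j, f j) := by
        gcongr with i
        rw [two_mul]
        exact add_le_add le_rfl (hd i)
    _ = (∑' i, f i) ^ 2 + 2 * ∑' i, f i := by
        rw [ENNReal.tsum_add, ENNReal.tsum_mul_left, ENNReal.tsum_mul_right, sq, add_comm]

section Indicator

variable {Ω ι : Type*} [MeasurableSpace Ω] [Countable ι] (μ : Measure Ω) {B : ι → Set Ω}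

theorem lintegral_tsum_indicator_one (hB : ∀ i, MeasurableSet (B i)) :
    ∫⁻ ω, ∑' i, (B i).indicator (fun _ => (1 : ℝ≥0∞)) ω ∂μ = ∑' i, μ (B i) := by
  rw [lintegral_tsum fun i => (measurable_const.indicator (hB i)).aemeasurable]
  exact tsum_congr fun i => lintegral_indicator_one (hB i)

theorem lintegral_tsum_indicator_one_sq (hB : ∀ i, MeasurableSet (B i)) :
    ∫⁻ ω, (∑' i, (B i).indicator (fun _ => (1 : ℝ≥0∞)) ω) ^ 2 ∂μ
      = ∑' i, ∑' j, μ (B i ∩ B j) := by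
  have hsq : ∀ ω, (∑' i, (B i).indicator (fun _ => (1 : ℝ≥0∞)) ω) ^ 2
      = ∑' i, ∑' j, (B i ∩ B j).indicator (fun _ => (1 : ℝ≥0∞)) ω := by
    intro ω
    rw [sq, ← ENNReal.tsum_mul_right]
    refine tsum_congr fun i => ?_
    rw [← ENNReal.tsum_mul_left]
    exact tsum_congr fun j =>
      (congrFun (Set.inter_indicator_one (s := B i) (t := B j)) ω).symm
  simp_rw [hsq]
  rw [lintegral_tsum fun i => (Measurable.tsum fun j =>
    measurable_const.indicator ((hB i).inter (hB j))).aemeasurable]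
  exact tsum_congr fun i => lintegral_tsum_indicator_one μ fun j => (hB i).inter (hB j)

end Indicator

section OrderedPair

variable {ι : Type*} [LinearOrder ι]

def orderedPair (i k : ι) : {p : ι × ι // p.1 ≤ p.2} := ⟨(min i k, max i k), min_le_max⟩

theorem eq_or_eq_of_orderedPair_eq {i k j l : ι} (h : orderedPair i k = orderedPair j l) :
    j = i ∨ j = k := by
  have hmin : min i k = min j l := congrArg (fun p => p.1.1) h
  have hmax : max i k = max j l := congrArg (fun p => p.1.2) h
  rcases le_total j l with hjl | hlj
  · rw [min_eq_left hjl] at hmin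
    rw [← hmin]
    exact min_choice i k
  · rw [max_eq_left hlj] at hmax
    rw [← hmax]
    exact max_choice i k

theorem apply_orderedPair {α : Type*} {A : ι → ι → α} (hsymm : ∀ i j, A i j = A j i) (i k : ι) :
    A (orderedPair i k).1.1 (orderedPair i k).1.2 = A i k := by
  rcases le_total i k with h | h
  · simp [orderedPair, h]
  · simp [orderedPair, h, hsymm k i]

end OrderedPair

section OtherEdges

variable {Ω ι : Type*} {A : ι → ι → Set Ω}

def otherEdges (A : ι → ι → Set Ω) (i j : ι) : Set Ω := ⋃ (k) (_ : k ≠ j), A i k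

theorem otherEdges_subset_iUnion (i j : ι) : otherEdges A i j ⊆ ⋃ k, A i k :=
  Set.iUnion₂_subset fun k _ => Set.subset_iUnion (A i) k

theorem iUnion_subset_union_otherEdges (i j : ι) : ⋃ k, A i k ⊆ A i j ∪ otherEdges A i j := by
  refine Set.iUnion_subset fun k => ?_
  rcases eq_or_ne k j with rfl | hkj
  · exact Set.subset_union_left
  · exact (Set.subset_biUnion_of_mem (u := fun k => A i k) hkj).trans Set.subset_union_right

variable [MeasurableSpace Ω] [Countable ι]

theorem measurableSet_otherEdges (hA : ∀ i j, MeasurableSet (A i j)) (i j : ι) :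
    MeasurableSet (otherEdges A i j) :=
  MeasurableSet.iUnion fun k => MeasurableSet.iUnion fun _ => hA i k

theorem tsum_measure_diff_otherEdges_le (μ : Measure Ω) (hA : ∀ i j, MeasurableSet (A i j))
    (i : ι) : ∑' j, μ (A i j \ otherEdges A i j) ≤ μ (⋃ k, A i k) := by
  have hdisj : Pairwise (Function.onFun Disjoint fun j => A i j \ otherEdges A i j) := by
    intro j k hjk
    refine Set.disjoint_left.2 fun ω hωj hωk => ?_
    exact hωk.2 (Set.mem_biUnion hjk hωj.1)
  calc ∑' j, μ (A i j \ otherEdges A i j)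
      ≤ μ (⋃ j, A i j \ otherEdges A i j) := tsum_meas_le_meas_iUnion_of_disjoint μ
        (fun j => (hA i j).diff (measurableSet_otherEdges hA i j)) hdisj
    _ ≤ μ (⋃ k, A i k) := measure_mono (Set.iUnion_mono fun j => Set.sdiff_subset)

theorem measure_otherEdges_inter_iUnion [LinearOrder ι] {P : Measure Ω}
    (hA : ∀ i j, MeasurableSet (A i j)) (hsymm : ∀ i j, A i j = A j i)
    (hindep : iIndepSet (fun p : {p : ι × ι // p.1 ≤ p.2} => A p.1.1 p.1.2) P)
    {i j : ι} (hij : i ≠ j) :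
    P (otherEdges A i j ∩ ⋃ l, A j l) = P (otherEdges A i j) * P (⋃ l, A j l) := by
  set S := {p | ∃ k, k ≠ j ∧ orderedPair i k = p}
  set T := Set.range (orderedPair j)
  have hST : Disjoint S T := by
    rw [Set.disjoint_left]
    rintro p ⟨k, hkj, rfl⟩ ⟨l, hl⟩
    rcases eq_or_eq_of_orderedPair_eq hl.symm with hji | hjk
    exacts [hij hji.symm, hkj hjk.symm]
  have hS : MeasurableSet[MeasurableSpace.generateFrom {t | ∃ p ∈ S, A p.1.1 p.1.2 = t}]
      (otherEdges A i j) :=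
    MeasurableSet.iUnion fun k => MeasurableSet.iUnion fun hkj =>
      MeasurableSpace.measurableSet_generateFrom ⟨_, ⟨k, hkj, rfl⟩, apply_orderedPair hsymm i k⟩
  have hT : MeasurableSet[MeasurableSpace.generateFrom {t | ∃ p ∈ T, A p.1.1 p.1.2 = t}]
      (⋃ l, A j l) :=
    MeasurableSet.iUnion fun l =>
      MeasurableSpace.measurableSet_generateFrom ⟨_, ⟨l, rfl⟩, apply_orderedPair hsymm j l⟩
  exact ((hindep.indep_generateFrom_of_disjoint (fun p => hA p.1.1 p.1.2) S T hST
    ).indepSet_of_measurableSet hS hT).measure_inter_eq_mul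

theorem measure_iUnion_inter_iUnion_le [LinearOrder ι] {P : Measure Ω}
    (hA : ∀ i j, MeasurableSet (A i j)) (hsymm : ∀ i j, A i j = A j i)
    (hindep : iIndepSet (fun p : {p : ι × ι // p.1 ≤ p.2} => A p.1.1 p.1.2) P)
    {i j : ι} (hij : i ≠ j) :
    P ((⋃ k, A i k) ∩ ⋃ l, A j l)
      ≤ P (A i j \ otherEdges A i j) + P (⋃ k, A i k) * P (⋃ l, A j l) := by
  have hsplit : (⋃ k, A i k) ∩ ⋃ l, A j l
      ⊆ (A i j \ otherEdges A i j) ∪ (otherEdges A i j ∩ ⋃ l, A j l) := by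
    rintro ω ⟨hωi, hωj⟩
    by_cases hω : ω ∈ otherEdges A i j
    · exact Or.inr ⟨hω, hωj⟩
    · exact Or.inl ⟨(iUnion_subset_union_otherEdges i j hωi).resolve_right hω, hω⟩
  calc P ((⋃ k, A i k) ∩ ⋃ l, A j l)
      ≤ P (A i j \ otherEdges A i j) + P (otherEdges A i j ∩ ⋃ l, A j l) :=
        (measure_mono hsplit).trans (measure_union_le _ _)
    _ = P (A i j \ otherEdges A i j) + P (otherEdges A i j) * P (⋃ l, A j l) := by
        rw [measure_otherEdges_inter_iUnion hA hsymm hindep hij]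
    _ ≤ P (A i j \ otherEdges A i j) + P (⋃ k, A i k) * P (⋃ l, A j l) := by
        gcongr
        exact otherEdges_subset_iUnion i j

end OtherEdges

theorem stmt6_general {Ω : Type*} [MeasurableSpace Ω] (P : Measure Ω)
    (A : ℕ → ℕ → Set Ω) (hAmeas : ∀ i j, MeasurableSet (A i j))
    (hsymm : ∀ i j, A i j = A j i)
    (hindep : iIndepSet (fun p : {p : ℕ × ℕ // p.1 ≤ p.2} => A p.1.1 p.1.2) P) :
    (∫⁻ ω, (∑' i, Set.indicator (⋃ j, A i j) (fun _ => (1:ℝ≥0∞)) ω) ^ 2 ∂P)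
      ≤ (∫⁻ ω, (∑' i, Set.indicator (⋃ j, A i j) (fun _ => (1:ℝ≥0∞)) ω) ∂P) ^ 2
        + 2 * ∫⁻ ω, (∑' i, Set.indicator (⋃ j, A i j) (fun _ => (1:ℝ≥0∞)) ω) ∂P := by
  have hB : ∀ i, MeasurableSet (⋃ j, A i j) := fun i => MeasurableSet.iUnion (hAmeas i)
  rw [lintegral_tsum_indicator_one_sq P hB, lintegral_tsum_indicator_one P hB]
  exact ENNReal.tsum_tsum_le_sq_add_two_mul _ (fun i j => P (A i j \ otherEdges A i j)) _
    (fun i => by rw [Set.inter_self])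
    (fun i j hij => measure_iUnion_inter_iUnion_le hAmeas hsymm hindep hij)
    (tsum_measure_diff_otherEdges_le P hAmeas)

/-- For a symmetric array of independent (over `i ≤ j`) indicator events `A i j`,
`Iᵢ := max_j I_{ij}` (indicator of `⋃ j, A i j`) and `W := ∑ᵢ Iᵢ`, we have
`Var W ≤ 2 E W`, expressed as `E[W²] ≤ (E W)² + 2 E W`. -/
theorem stmt6 {Ω : Type*} [MeasurableSpace Ω] (P : Measure Ω) [IsProbabilityMeasure P]
    (A : ℕ → ℕ → Set Ω) (hAmeas : ∀ i j, MeasurableSet (A i j))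
    (hsymm : ∀ i j, A i j = A j i)
    (hindep : iIndepSet (fun p : {p : ℕ × ℕ // p.1 ≤ p.2} => A p.1.1 p.1.2) P) :
    (∫⁻ ω, (∑' i, Set.indicator (⋃ j, A i j) (fun _ => (1:ℝ≥0∞)) ω) ^ 2 ∂P)
      ≤ (∫⁻ ω, (∑' i, Set.indicator (⋃ j, A i j) (fun _ => (1:ℝ≥0∞)) ω) ∂P) ^ 2
        + 2 * ∫⁻ ω, (∑' i, Set.indicator (⋃ j, A i j) (fun _ => (1:ℝ≥0∞)) ω) ∂P :=
  stmt6_general P A hAmeas hsymm hindep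
end

section
/- For distinct indices $i \ne j$, let $I_{ij} = I_{ji}$ be indicator variables with $\{I_{ij}\}_{i < j}$ independent, set $I_i := \max_j I_{ij}$ and $\bar I_{ij} := 1 - I_{ij}$, $q_{ij} := \mathbb{E}\bar I_{ij}$. Then for $i \ne j$, $\mathrm{Cov}(I_i, I_j) = q_{ij}(1 - q_{ij})\, \mathbb{E}\big[\prod_{k \ne j} \bar I_{ik} \prod_{k \ne i} \bar I_{jk}\big]$, and in particular $\mathrm{Cov}(I_i, I_j) \le \mathbb{P}\big(I_{ij} = 1 \text{ and } I_{ik} = 0 \text{ for all } k \ne j\big)$. -/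
/-!
Let `C = {I_ij = 0}`, `Bᵢ = {I_ik = 0 for all k ≠ j}` and `Bⱼ = {I_jk = 0 for all k ≠ i}`. Then
`{Iᵢ = 0} = C ∩ Bᵢ` and `{Iⱼ = 0} = C ∩ Bⱼ`, and `C`, `Bᵢ`, `Bⱼ` are independent because they are
determined by disjoint sets of pairs. Since `Cov(Iᵢ, Iⱼ) = Cov(1 - Iᵢ, 1 - Iⱼ)`, the covariance is
`P(C ∩ Bᵢ ∩ Bⱼ) - P(C)² P(Bᵢ) P(Bⱼ) = q (1 - q) P(Bᵢ ∩ Bⱼ)`. For the bound,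
`q P(Bᵢ ∩ Bⱼ) = P(C ∩ Bᵢ ∩ Bⱼ) ≤ P(Bᵢ)` and `(1 - q) P(Bᵢ) = P(I_ij = 1, Bᵢ)`.
-/

open MeasureTheory ProbabilityTheory

theorem Set.compl_iUnion_eq_compl_inter_biInter_erase {α β : Type*} [Fintype α] [DecidableEq α]
    (f : α → Set β) (j : α) : (⋃ k, f k)ᶜ = (f j)ᶜ ∩ ⋂ k ∈ Finset.univ.erase j, (f k)ᶜ := by
  rw [← Finset.set_biInter_insert j _ fun k ↦ (f k)ᶜ, Finset.insert_erase (Finset.mem_univ j),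
    Set.compl_iUnion]
  simp

theorem Finset.prod_one_sub_indicator_one_apply {ι β R : Type*} [CommRing R] (s : Finset ι)
    (f : ι → Set β) (x : β) :
    ∏ k ∈ s, (1 - (f k).indicator (1 : β → R) x) = (⋂ k ∈ s, (f k)ᶜ).indicator 1 x := by
  have h (k : ι) : 1 - (f k).indicator (1 : β → R) x = (f k)ᶜ.indicator 1 x := by
    rw [Set.indicator_compl, Pi.sub_apply, Pi.one_apply]
  simp_rw [h, prod_indicator_const_apply, one_pow]

section Measure

variable {Ω : Type*} [MeasurableSpace Ω] {μ : Measure Ω} {s t : Set Ω}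

theorem integral_indicator_one_mul_indicator_one (hs : MeasurableSet s) (ht : MeasurableSet t) :
    ∫ ω, s.indicator (1 : Ω → ℝ) ω * t.indicator 1 ω ∂μ = μ.real (s ∩ t) := by
  rw [← integral_indicator_one (hs.inter ht), Set.inter_indicator_one]
  rfl

theorem measureReal_compl_inter_compl_sub_mul [IsProbabilityMeasure μ] (hs : MeasurableSet s)
    (ht : MeasurableSet t) :
    μ.real (sᶜ ∩ tᶜ) - μ.real sᶜ * μ.real tᶜ = μ.real (s ∩ t) - μ.real s * μ.real t := by
  have hunion := measureReal_union_add_inter (μ := μ) (s := s) ht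
  rw [← Set.compl_union, probReal_compl_eq_one_sub (hs.union ht), probReal_compl_eq_one_sub hs,
    probReal_compl_eq_one_sub ht]
  linarith

end Measure

namespace ProbabilityTheory.iIndepSet

variable {Ω ι : Type*} [MeasurableSpace Ω] {μ : Measure Ω} {g : ι → Set Ω}

theorem compl (hg : iIndepSet g μ) : iIndepSet (fun i ↦ (g i)ᶜ) μ := by
  rw [iIndepSet_iff] at hg ⊢
  refine fun s f hf ↦ hg s fun i hi ↦ MeasurableSpace.generateFrom_le ?_ _ (hf i hi)
  rintro _ rfl
  exact (MeasurableSpace.measurableSet_generateFrom (Set.mem_singleton _)).compl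

theorem measureReal_biInter (hg : iIndepSet g μ) (s : Finset ι) :
    μ.real (⋂ i ∈ s, g i) = ∏ i ∈ s, μ.real (g i) := by
  simp only [measureReal_def, hg.meas_biInter, ENNReal.toReal_prod]

variable [DecidableEq ι] {e : ι} {s t : Finset ι}

theorem measureReal_biInter_inter_biInter (hg : iIndepSet g μ) (hst : Disjoint s t) :
    μ.real ((⋂ i ∈ s, g i) ∩ ⋂ i ∈ t, g i) = μ.real (⋂ i ∈ s, g i) * μ.real (⋂ i ∈ t, g i) := by
  rw [← Finset.set_biInter_inter, hg.measureReal_biInter, hg.measureReal_biInter,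
    hg.measureReal_biInter, Finset.prod_union hst]

theorem measureReal_inter_biInter (hg : iIndepSet g μ) (he : e ∉ s) :
    μ.real (g e ∩ ⋂ i ∈ s, g i) = μ.real (g e) * μ.real (⋂ i ∈ s, g i) := by
  simpa using hg.measureReal_biInter_inter_biInter (s := {e}) (Finset.disjoint_singleton_left.2 he)

variable [IsProbabilityMeasure μ]

theorem measureReal_compl_inter_compl_sub_mul_eq (hg : iIndepSet g μ)
    (hmeas : ∀ i, MeasurableSet (g i)) (hst : Disjoint s t) (hes : e ∉ s) (het : e ∉ t) :
    μ.real ((g e ∩ ⋂ i ∈ s, g i)ᶜ ∩ (g e ∩ ⋂ i ∈ t, g i)ᶜ)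
        - μ.real (g e ∩ ⋂ i ∈ s, g i)ᶜ * μ.real (g e ∩ ⋂ i ∈ t, g i)ᶜ
      = μ.real (g e) * (1 - μ.real (g e)) * μ.real ((⋂ i ∈ s, g i) ∩ ⋂ i ∈ t, g i) := by
  have hB (u : Finset ι) : MeasurableSet (⋂ i ∈ u, g i) :=
    u.measurableSet_biInter fun i _ ↦ hmeas i
  have heu : e ∉ s ∪ t := by simp [hes, het]
  rw [measureReal_compl_inter_compl_sub_mul ((hmeas e).inter (hB s)) ((hmeas e).inter (hB t)),
    ← Set.inter_inter_distrib_left, ← Finset.set_biInter_inter, hg.measureReal_inter_biInter heu,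
    Finset.set_biInter_inter, hg.measureReal_inter_biInter hes, hg.measureReal_inter_biInter het,
    hg.measureReal_biInter_inter_biInter hst]
  ring

theorem measureReal_compl_inter_compl_sub_mul_le (hg : iIndepSet g μ)
    (hmeas : ∀ i, MeasurableSet (g i)) (hst : Disjoint s t) (hes : e ∉ s) (het : e ∉ t) :
    μ.real ((g e ∩ ⋂ i ∈ s, g i)ᶜ ∩ (g e ∩ ⋂ i ∈ t, g i)ᶜ)
        - μ.real (g e ∩ ⋂ i ∈ s, g i)ᶜ * μ.real (g e ∩ ⋂ i ∈ t, g i)ᶜ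
      ≤ μ.real ((g e)ᶜ ∩ ⋂ i ∈ s, g i) := by
  rw [hg.measureReal_compl_inter_compl_sub_mul_eq hmeas hst hes het]
  have hsplit : μ.real ((g e)ᶜ ∩ ⋂ i ∈ s, g i) = (1 - μ.real (g e)) * μ.real (⋂ i ∈ s, g i) := by
    have := measureReal_inter_add_sdiff (μ := μ) (s := ⋂ i ∈ s, g i) (hmeas e)
    rw [Set.inter_comm, hg.measureReal_inter_biInter hes, Set.sdiff_eq, Set.inter_comm] at this
    linarith
  have hle : μ.real (g e) * μ.real ((⋂ i ∈ s, g i) ∩ ⋂ i ∈ t, g i) ≤ μ.real (⋂ i ∈ s, g i) := by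
    rw [← Finset.set_biInter_inter, ← hg.measureReal_inter_biInter (by simp [hes, het]),
      Finset.set_biInter_inter]
    exact measureReal_mono (Set.inter_subset_right.trans Set.inter_subset_left)
  calc μ.real (g e) * (1 - μ.real (g e)) * μ.real ((⋂ i ∈ s, g i) ∩ ⋂ i ∈ t, g i)
      = (1 - μ.real (g e)) * (μ.real (g e) * μ.real ((⋂ i ∈ s, g i) ∩ ⋂ i ∈ t, g i)) := by ring
    _ ≤ (1 - μ.real (g e)) * μ.real (⋂ i ∈ s, g i) :=
      mul_le_mul_of_nonneg_left hle (sub_nonneg.2 measureReal_le_one)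
    _ = μ.real ((g e)ᶜ ∩ ⋂ i ∈ s, g i) := hsplit.symm

end ProbabilityTheory.iIndepSet

section Pairs

variable {n : ℕ} {Ω : Type*} {A : Fin n → Fin n → Set Ω} {i j : Fin n}

def incidentPairsExcept (i j : Fin n) : Finset {p : Fin n × Fin n // p.1 < p.2} :=
  {p | (p.1.1 = i ∨ p.1.2 = i) ∧ p.1.1 ≠ j ∧ p.1.2 ≠ j}

theorem notMem_incidentPairsExcept {p : {p : Fin n × Fin n // p.1 < p.2}}
    (h : p.1.1 = j ∨ p.1.2 = j) : p ∉ incidentPairsExcept i j := by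
  simp only [incidentPairsExcept, Finset.mem_filter, Finset.mem_univ, true_and]
  tauto

theorem disjoint_incidentPairsExcept (i j : Fin n) :
    Disjoint (incidentPairsExcept i j) (incidentPairsExcept j i) := by
  rw [Finset.disjoint_left]
  intro p hp
  simp only [incidentPairsExcept, Finset.mem_filter, Finset.mem_univ, true_and] at hp
  exact notMem_incidentPairsExcept hp.1

theorem exists_pair_notMem_incidentPairsExcept (hsymm : ∀ i j, A i j = A j i) (hij : i ≠ j) :
    ∃ e : {p : Fin n × Fin n // p.1 < p.2}, A e.1.1 e.1.2 = A i j ∧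
      e ∉ incidentPairsExcept i j ∧ e ∉ incidentPairsExcept j i := by
  rcases hij.lt_or_gt with h | h
  · exact ⟨⟨(i, j), h⟩, rfl, notMem_incidentPairsExcept (Or.inr rfl),
      notMem_incidentPairsExcept (Or.inl rfl)⟩
  · exact ⟨⟨(j, i), h⟩, hsymm j i, notMem_incidentPairsExcept (Or.inl rfl),
      notMem_incidentPairsExcept (Or.inr rfl)⟩

theorem biInter_incidentPairsExcept_compl (hsymm : ∀ i j, A i j = A j i)
    (hdiag : ∀ i, A i i = ∅) (hij : i ≠ j) :
    ⋂ p ∈ incidentPairsExcept i j, (A p.1.1 p.1.2)ᶜ = ⋂ k ∈ Finset.univ.erase j, (A i k)ᶜ := by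
  ext ω
  simp only [incidentPairsExcept, Set.mem_iInter, Set.mem_compl_iff, Finset.mem_filter,
    Finset.mem_univ, true_and, Finset.mem_erase, and_true]
  constructor
  · intro h k hkj
    rcases lt_trichotomy i k with hik | rfl | hki
    · exact h ⟨(i, k), hik⟩ ⟨Or.inl rfl, hij, hkj⟩
    · simp [hdiag]
    · rw [hsymm]
      exact h ⟨(k, i), hki⟩ ⟨Or.inr rfl, hkj, hij⟩
  · rintro h ⟨⟨a, b⟩, hab⟩ ⟨rfl | rfl, ha, hb⟩
    · exact h b hb
    · rw [hsymm]
      exact h a ha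

theorem compl_iUnion_eq_compl_inter_biInter_incidentPairsExcept (hsymm : ∀ i j, A i j = A j i)
    (hdiag : ∀ i, A i i = ∅) (hij : i ≠ j) :
    (⋃ k, A i k)ᶜ = (A i j)ᶜ ∩ ⋂ p ∈ incidentPairsExcept i j, (A p.1.1 p.1.2)ᶜ := by
  rw [biInter_incidentPairsExcept_compl hsymm hdiag hij,
    Set.compl_iUnion_eq_compl_inter_biInter_erase]

end Pairs

/-- covariance identity and bound for `Iᵢ = max_j I_{ij}` built from a symmetric
array of independent indicators (events `A i j`, empty on the diagonal). -/
theorem stmt7 {Ω : Type*} [MeasurableSpace Ω] (P : Measure Ω) [IsProbabilityMeasure P]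
    {n : ℕ} (A : Fin n → Fin n → Set Ω)
    (hmeas : ∀ i j, MeasurableSet (A i j))
    (hsymm : ∀ i j, A i j = A j i) (hdiag : ∀ i, A i i = ∅)
    (hindep : iIndepSet (fun p : {p : Fin n × Fin n // p.1 < p.2} => A p.1.1 p.1.2) P)
    (i j : Fin n) (hij : i ≠ j)
    (χ : Fin n → Fin n → Ω → ℝ)
    (hχ : ∀ a b, χ a b = Set.indicator (A a b) (fun _ => (1:ℝ)))
    (Ind : Fin n → Ω → ℝ)
    (hInd : ∀ a, Ind a = Set.indicator (⋃ b, A a b) (fun _ => (1:ℝ)))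
    (q : ℝ) (hq : q = (P ((A i j)ᶜ)).toReal) :
    ((∫ ω, Ind i ω * Ind j ω ∂P) - (∫ ω, Ind i ω ∂P) * (∫ ω, Ind j ω ∂P)
      = q * (1 - q) *
        ∫ ω, (∏ k ∈ Finset.univ.erase j, (1 - χ i k ω)) *
             (∏ k ∈ Finset.univ.erase i, (1 - χ j k ω)) ∂P) ∧
    ((∫ ω, Ind i ω * Ind j ω ∂P) - (∫ ω, Ind i ω ∂P) * (∫ ω, Ind j ω ∂P)
      ≤ (P (A i j ∩ ⋂ k ∈ Finset.univ.erase j, (A i k)ᶜ)).toReal) := by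
  obtain ⟨e, hAe, heS, heT⟩ := exists_pair_notMem_incidentPairsExcept hsymm hij
  have hUi := compl_iUnion_eq_compl_inter_biInter_incidentPairsExcept hsymm hdiag hij
  have hUj := compl_iUnion_eq_compl_inter_biInter_incidentPairsExcept hsymm hdiag hij.symm
  rw [← hsymm i j] at hUj
  have hmeasc (p : {p : Fin n × Fin n // p.1 < p.2}) : MeasurableSet (A p.1.1 p.1.2)ᶜ :=
    (hmeas _ _).compl
  have hcov := hindep.compl.measureReal_compl_inter_compl_sub_mul_eq hmeasc
    (disjoint_incidentPairsExcept i j) heS heT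
  have hle := hindep.compl.measureReal_compl_inter_compl_sub_mul_le hmeasc
    (disjoint_incidentPairsExcept i j) heS heT
  rw [hAe, ← hUi, ← hUj, compl_compl, compl_compl,
    biInter_incidentPairsExcept_compl hsymm hdiag hij,
    biInter_incidentPairsExcept_compl hsymm hdiag hij.symm] at hcov
  rw [hAe, ← hUi, ← hUj, compl_compl, compl_compl, compl_compl,
    biInter_incidentPairsExcept_compl hsymm hdiag hij] at hle
  have hX (a : Fin n) : MeasurableSet (⋃ k, A a k) := MeasurableSet.iUnion (hmeas a)
  have hB (a b : Fin n) : MeasurableSet (⋂ k ∈ Finset.univ.erase b, (A a k)ᶜ) :=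
    Finset.measurableSet_biInter _ fun k _ ↦ (hmeas a k).compl
  simp only [hχ, hInd, ← Pi.one_def, Finset.prod_one_sub_indicator_one_apply]
  rw [integral_indicator_one_mul_indicator_one (hX i) (hX j),
    integral_indicator_one_mul_indicator_one (hB i j) (hB j i),
    integral_indicator_one (hX i), integral_indicator_one (hX j)]
  subst hq
  exact ⟨hcov, hle⟩
end

section
/- Let $c > 0$ and let $q_i \asymp \tfrac{1}{i \log^2 i}$ for $i \ge 2$. Then $v(t) := \sum_{i\ge2} \min(1, t q_i) \asymp t/\log t$ as $t \to \infty$, and $e(t) := \sum_{i \ne j} \min(1, t q_i q_j) \asymp t/\log t$ as $t \to \infty$. Consequently $e(t) \asymp v(t)$, i.e., the corresponding rank-1 edge-exchangeable random graph is extremely sparse. -/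
/-!
Comparison with the telescoping differences `1 / log i - 1 / log (i + 1)` shows that the tail
`∑_{i ≥ k} 1 / (i log² i)` is `≍ 1 / log k`. In `v(t)` the terms with `i ≤ √t` contribute at most
`√t`, the others at most `t · O(1 / log √t)`; conversely the terms with `i ≳ t` are not truncated
and give `t · Ω(1 / log t)`. In `e(t)` the pairs with both indices below `t^{1/4}` contribute at
most `√t` and all other pairs at most `2 t (∑ᵢ qᵢ) (∑_{i ≥ t^{1/4}} qᵢ) = O(t / log t)`, while the
pairs `(i, 2)` alone form a vertex sum like `v(t)`. Both are thus `≍ t / log t`, hence `e ≍ v`.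
-/

open Filter Topology Asymptotics Real

noncomputable def logWeight (i : ℕ) : ℝ := ((i : ℝ) * log i ^ 2)⁻¹

lemma logWeight_nonneg (i : ℕ) : 0 ≤ logWeight i := by
  unfold logWeight; positivity

lemma logWeight_le_inv {i : ℕ} (hi : 3 ≤ i) : logWeight i ≤ (i : ℝ)⁻¹ := by
  have hi' : (3 : ℝ) ≤ i := by exact_mod_cast hi
  have hlog : 1 ≤ log i := by
    rw [le_log_iff_exp_le (by positivity)]
    linarith [exp_one_lt_d9]
  unfold logWeight
  gcongr
  exact le_mul_of_one_le_right (by positivity) (one_le_pow₀ hlog)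

lemma log_succ_sub_log_mem_Icc {i : ℕ} (hi : 1 ≤ i) :
    log (i + 1 : ℕ) - log i ∈ Set.Icc ((i : ℝ) + 1)⁻¹ (i : ℝ)⁻¹ := by
  have hi' : (0 : ℝ) < i := by exact_mod_cast hi
  rw [Set.mem_Icc, Nat.cast_succ, ← log_div (by positivity) hi'.ne']
  constructor
  · calc ((i : ℝ) + 1)⁻¹ = 1 - (((i : ℝ) + 1) / i)⁻¹ := by field_simp; ring
      _ ≤ _ := one_sub_inv_le_log_of_pos (by positivity)
  · calc log (((i : ℝ) + 1) / i) ≤ ((i : ℝ) + 1) / i - 1 := log_le_sub_one_of_pos (by positivity)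
      _ = (i : ℝ)⁻¹ := by field_simp; ring

lemma inv_log_sub_inv_log_succ_le_logWeight {i : ℕ} (hi : 2 ≤ i) :
    (log i)⁻¹ - (log (i + 1 : ℕ))⁻¹ ≤ logWeight i := by
  have hi' : (2 : ℝ) ≤ i := by exact_mod_cast hi
  have hx : 0 < log i := log_pos (by linarith)
  have hxy : log i ≤ log (i + 1 : ℕ) := log_le_log (by linarith) (by push_cast; linarith)
  rw [inv_sub_inv hx.ne' (hx.trans_le hxy).ne']
  calc (log (i + 1 : ℕ) - log i) / (log i * log (i + 1 : ℕ))
      ≤ (i : ℝ)⁻¹ / (log i * log i) :=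
        div_le_div₀ (by positivity) (log_succ_sub_log_mem_Icc (by omega)).2 (by positivity)
          (by gcongr)
    _ = logWeight i := by rw [logWeight]; field_simp

lemma logWeight_le_four_mul_inv_log_sub_inv_log_succ {i : ℕ} (hi : 2 ≤ i) :
    logWeight i ≤ 4 * ((log i)⁻¹ - (log (i + 1 : ℕ))⁻¹) := by
  have hi' : (2 : ℝ) ≤ i := by exact_mod_cast hi
  have hx : 0 < log i := log_pos (by linarith)
  have hy2 : log (i + 1 : ℕ) ≤ 2 * log i := by
    have := log_le_log (by positivity)
      (show ((i + 1 : ℕ) : ℝ) ≤ (i : ℝ) ^ 2 by push_cast; nlinarith)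
    rwa [log_pow, Nat.cast_ofNat] at this
  have hd : 1 ≤ 2 * i * (log (i + 1 : ℕ) - log i) := by
    have := (log_succ_sub_log_mem_Icc (i := i) (by omega)).1
    rw [inv_le_iff_one_le_mul₀ (by positivity)] at this
    nlinarith
  have hy : 0 < log (i + 1 : ℕ) := by nlinarith
  rw [logWeight, inv_sub_inv hx.ne' hy.ne', inv_le_iff_one_le_mul₀ (by positivity)]
  field_simp
  nlinarith

lemma hasSum_sub_succ_of_antitone {f : ℕ → ℝ} (hf : Antitone f) (hf0 : Tendsto f atTop (𝓝 0)) :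
    HasSum (fun n => f n - f (n + 1)) (f 0) := by
  refine (hasSum_iff_tendsto_nat_of_nonneg (fun n => sub_nonneg.2 (hf n.le_succ)) _).2 ?_
  simp_rw [Finset.sum_range_sub']
  simpa using tendsto_const_nhds.sub hf0

lemma hasSum_inv_log_sub_inv_log_succ {k : ℕ} (hk : 2 ≤ k) :
    HasSum (fun n => (log (n + k : ℕ))⁻¹ - (log (n + k + 1 : ℕ))⁻¹) (log k)⁻¹ := by
  have hmono : Antitone fun n : ℕ => (log (n + k : ℕ))⁻¹ := by
    refine antitone_nat_of_succ_le fun n => inv_anti₀ (log_pos ?_) (log_le_log ?_ ?_)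
    all_goals norm_cast; omega
  have hlim : Tendsto (fun n : ℕ => (log (n + k : ℕ))⁻¹) atTop (𝓝 0) :=
    tendsto_inv_atTop_zero.comp <| tendsto_log_atTop.comp <|
      tendsto_natCast_atTop_atTop.comp (tendsto_add_atTop_nat k)
  simpa [add_right_comm _ 1 k] using hasSum_sub_succ_of_antitone hmono hlim

lemma summable_logWeight : Summable logWeight := by
  refine (summable_nat_add_iff 2).1 <| .of_nonneg_of_le (fun n => logWeight_nonneg _)
    (fun n => logWeight_le_four_mul_inv_log_sub_inv_log_succ (by omega))
    ((hasSum_inv_log_sub_inv_log_succ le_rfl).summable.mul_left 4)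

lemma summable_logWeight_nat_add (k : ℕ) : Summable fun n => logWeight (n + k) :=
  (summable_nat_add_iff k).2 summable_logWeight

lemma inv_log_le_tsum_logWeight_nat_add {k : ℕ} (hk : 2 ≤ k) :
    (log k)⁻¹ ≤ ∑' n, logWeight (n + k) :=
  hasSum_le (fun _ => inv_log_sub_inv_log_succ_le_logWeight (by omega))
    (hasSum_inv_log_sub_inv_log_succ hk) (summable_logWeight_nat_add k).hasSum

lemma tsum_logWeight_nat_add_le {k : ℕ} (hk : 2 ≤ k) :
    ∑' n, logWeight (n + k) ≤ 4 / log k := by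
  rw [div_eq_mul_inv]
  exact hasSum_le (fun _ => logWeight_le_four_mul_inv_log_sub_inv_log_succ (by omega))
    (summable_logWeight_nat_add k).hasSum ((hasSum_inv_log_sub_inv_log_succ hk).mul_left 4)

section Comparison

variable {f : ℕ → ℝ} {C : ℝ} {k : ℕ}

lemma summable_of_le_mul_logWeight (hf₀ : ∀ n, 0 ≤ f n)
    (hf : ∀ n, f n ≤ C * logWeight (n + k)) : Summable f :=
  .of_nonneg_of_le hf₀ hf ((summable_logWeight_nat_add k).mul_left C)

lemma tsum_le_of_le_mul_logWeight (hk : 2 ≤ k) (hC : 0 ≤ C) (hf₀ : ∀ n, 0 ≤ f n)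
    (hf : ∀ n, f n ≤ C * logWeight (n + k)) : ∑' n, f n ≤ 4 * C / log k :=
  calc ∑' n, f n ≤ ∑' n, C * logWeight (n + k) :=
        (summable_of_le_mul_logWeight hf₀ hf).tsum_le_tsum hf
          ((summable_logWeight_nat_add k).mul_left C)
    _ = C * ∑' n, logWeight (n + k) := tsum_mul_left
    _ ≤ C * (4 / log k) := by gcongr; exact tsum_logWeight_nat_add_le hk
    _ = 4 * C / log k := by ring

lemma div_log_le_tsum_of_mul_logWeight_le (hk : 2 ≤ k) (hC : 0 ≤ C) (hfs : Summable f)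
    (hf : ∀ n, C * logWeight (n + k) ≤ f n) : C / log k ≤ ∑' n, f n :=
  calc C / log k = C * (log k)⁻¹ := div_eq_mul_inv _ _
    _ ≤ C * ∑' n, logWeight (n + k) := by gcongr; exact inv_log_le_tsum_logWeight_nat_add hk
    _ = ∑' n, C * logWeight (n + k) := tsum_mul_left.symm
    _ ≤ ∑' n, f n := ((summable_logWeight_nat_add k).mul_left C).tsum_le_tsum hf hfs

end Comparison

lemma sqrt_le_two_mul_div_log {t : ℝ} (ht : 1 < t) : √t ≤ 2 * (t / log t) := by
  have hlog : 0 < log t := log_pos ht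
  have hsqrt : log t ≤ 2 * √t := by
    linarith [log_sqrt (by linarith : (0 : ℝ) ≤ t),
      log_le_sub_one_of_pos (sqrt_pos.2 (by linarith : (0 : ℝ) < t))]
  rw [mul_div_assoc', le_div_iff₀ hlog]
  nlinarith [sq_sqrt (by linarith : (0 : ℝ) ≤ t), sqrt_nonneg t]

lemma one_le_div_log {t : ℝ} (ht : 1 < t) : 1 ≤ t / log t := by
  rw [one_le_div (log_pos ht)]
  linarith [log_le_sub_one_of_pos (by linarith : (0 : ℝ) < t)]

lemma tendsto_div_log_atTop : Tendsto (fun t => t / log t) atTop atTop := by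
  refine tendsto_atTop_mono' _ ?_
    (tendsto_sqrt_atTop.const_mul_atTop (by norm_num : (0 : ℝ) < 1 / 2))
  filter_upwards [eventually_gt_atTop 1] with t ht
  linarith [sqrt_le_two_mul_div_log ht]

lemma tsum_min_one_le_add_tsum_nat_add {y : ℕ → ℝ} (hy₀ : ∀ i, 0 ≤ y i) (hy : Summable y)
    (K : ℕ) : ∑' i, min 1 (y i) ≤ K + ∑' n, y (n + K) := by
  have hs : Summable fun i => min 1 (y i) :=
    hy.of_nonneg_of_le (fun i => le_min zero_le_one (hy₀ i)) (fun i => min_le_right _ _)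
  rw [← hs.sum_add_tsum_nat_add K]
  refine add_le_add ?_ <| ((summable_nat_add_iff K).2 hs).tsum_le_tsum
    (fun n => min_le_right _ _) ((summable_nat_add_iff K).2 hy)
  calc ∑ i ∈ Finset.range K, min 1 (y i) ≤ ∑ _i ∈ Finset.range K, (1 : ℝ) :=
        Finset.sum_le_sum fun i _ => min_le_left _ _
    _ = K := by simp

noncomputable def vertexCount (r : ℕ → ℝ) (t : ℝ) : ℝ := ∑' i : ℕ, min 1 (t * r (i + 2))

noncomputable def edgeTerm (q : ℕ → ℝ) (t : ℝ) (p : ℕ × ℕ) : ℝ :=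
  if p.1 ≠ p.2 then min 1 (t * q (p.1 + 2) * q (p.2 + 2)) else 0

noncomputable def edgeCount (q : ℕ → ℝ) (t : ℝ) : ℝ := ∑' p : ℕ × ℕ, edgeTerm q t p

section VertexCount

variable {r : ℕ → ℝ} {a b t : ℝ}

lemma vertexCount_nonneg (ht : 0 ≤ t) (hr₀ : ∀ i, 2 ≤ i → 0 ≤ r i) : 0 ≤ vertexCount r t :=
  tsum_nonneg fun i => le_min zero_le_one (mul_nonneg ht (hr₀ _ (by omega)))

lemma vertexCount_le (hb : 0 ≤ b) (hr₀ : ∀ i, 2 ≤ i → 0 ≤ r i)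
    (hrb : ∀ i, 2 ≤ i → r i ≤ b * logWeight i) (ht : 1 < t) :
    vertexCount r t ≤ (3 + 8 * b) * (t / log t) := by
  have hlog : 0 < log t := log_pos ht
  have hy₀ : ∀ i, 0 ≤ t * r (i + 2) := fun i => mul_nonneg (by linarith) (hr₀ _ (by omega))
  have hyb : ∀ i, t * r (i + 2) ≤ t * b * logWeight (i + 2) := fun i => by
    rw [mul_assoc]; exact mul_le_mul_of_nonneg_left (hrb _ (by omega)) (by linarith)
  set M := ⌈√t⌉₊
  have hM : (M : ℝ) ≤ √t + 1 := (Nat.ceil_lt_add_one (sqrt_nonneg t)).le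
  have hlogM : log t / 2 ≤ log (M + 2 : ℕ) := by
    rw [← log_sqrt (by linarith)]
    exact log_le_log (sqrt_pos.2 (by linarith)) (by push_cast; linarith [Nat.le_ceil √t])
  have htail : ∑' n, t * r (n + M + 2) ≤ 4 * (t * b) / log (M + 2 : ℕ) :=
    tsum_le_of_le_mul_logWeight (by omega) (by positivity) (fun n => hy₀ _) (fun n => hyb (n + M))
  calc vertexCount r t ≤ M + ∑' n, t * r (n + M + 2) :=
        tsum_min_one_le_add_tsum_nat_add hy₀ (summable_of_le_mul_logWeight hy₀ hyb) M
    _ ≤ (√t + 1) + 4 * (t * b) / (log t / 2) := by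
        gcongr
        exact htail.trans (by gcongr)
    _ ≤ (3 + 8 * b) * (t / log t) := by
        have hscale : 4 * (t * b) / (log t / 2) = 8 * b * (t / log t) := by field_simp; ring
        linarith [sqrt_le_two_mul_div_log ht, one_le_div_log ht]

lemma mul_div_log_le_vertexCount (ha : 0 ≤ a) (hb : 0 ≤ b)
    (hra : ∀ i, 2 ≤ i → a * logWeight i ≤ r i) (hrb : ∀ i, 2 ≤ i → r i ≤ b * logWeight i)
    (ht : b + 4 ≤ t) : a / 2 * (t / log t) ≤ vertexCount r t := by
  have ht1 : 1 < t := by linarith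
  have hr₀ : ∀ i, 2 ≤ i → 0 ≤ r i := fun i hi =>
    (mul_nonneg ha (logWeight_nonneg i)).trans (hra i hi)
  have hy₀ : ∀ i, 0 ≤ min 1 (t * r (i + 2)) := fun i =>
    le_min zero_le_one (mul_nonneg (by linarith) (hr₀ _ (by omega)))
  have hs : Summable fun i => min 1 (t * r (i + 2)) :=
    summable_of_le_mul_logWeight hy₀ fun i => (min_le_right _ _).trans <| by
      rw [mul_assoc]; exact mul_le_mul_of_nonneg_left (hrb _ (by omega)) (by linarith)
  -- beyond `K + 2 ≥ b t` the truncation `min 1` is inactive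
  set K := ⌈b * t⌉₊ + 1 with hK_def
  have hKlo : b * t ≤ K := by rw [hK_def]; push_cast; linarith [Nat.le_ceil (b * t)]
  have hKhi : (K : ℝ) < b * t + 2 := by
    rw [hK_def]; push_cast; linarith [Nat.ceil_lt_add_one (by positivity : 0 ≤ b * t)]
  have hlin : ∀ n, t * a * logWeight (n + (K + 2)) ≤ min 1 (t * r (n + K + 2)) := by
    intro n
    have hn : b * t ≤ (n + (K + 2) : ℕ) := by push_cast; linarith [(n.cast_nonneg : (0 : ℝ) ≤ n)]
    have hlo : t * a * logWeight (n + (K + 2)) ≤ t * r (n + K + 2) := by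
      rw [mul_assoc]; exact mul_le_mul_of_nonneg_left (hra _ (by omega)) (by linarith)
    have hhi : t * r (n + K + 2) ≤ 1 :=
      calc t * r (n + K + 2) ≤ t * (b * (((n + (K + 2) : ℕ) : ℝ))⁻¹) :=
            mul_le_mul_of_nonneg_left ((hrb _ (by omega)).trans
              (mul_le_mul_of_nonneg_left (logWeight_le_inv (by omega)) hb)) (by linarith)
        _ ≤ 1 := by
            rw [← div_eq_mul_inv, mul_div_assoc', div_le_one (by positivity)]
            linarith
    exact le_min (hlo.trans hhi) hlo
  have hlogK : log (K + 2 : ℕ) ≤ 2 * log t :=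
    calc log (K + 2 : ℕ) ≤ log (t ^ 2) := log_le_log (by positivity) (by push_cast; nlinarith)
      _ = 2 * log t := by rw [log_pow, Nat.cast_ofNat]
  calc a / 2 * (t / log t) = t * a / (2 * log t) := by field_simp
    _ ≤ t * a / log (K + 2 : ℕ) := by
        gcongr
        exact log_pos (by norm_cast; omega)
    _ ≤ ∑' n, min 1 (t * r (n + K + 2)) :=
        div_log_le_tsum_of_mul_logWeight_le (by omega) (by positivity)
          ((summable_nat_add_iff K).2 hs) hlin
    _ ≤ vertexCount r t := tsum_comp_le_tsum_of_inj hs hy₀ (add_left_injective K)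

end VertexCount

section PairSums

variable {f : ℕ → ℝ} {g : ℕ × ℕ → ℝ} {t : ℝ}

lemma summable_of_le_mul_mul (hf₀ : ∀ i, 0 ≤ f i) (hf : Summable f) (hg₀ : ∀ p, 0 ≤ g p)
    (hg : ∀ p, g p ≤ t * f p.1 * f p.2) : Summable g :=
  ((hf.mul_of_nonneg hf hf₀ hf₀).mul_left t).of_nonneg_of_le hg₀ fun p =>
    (hg p).trans_eq (mul_assoc _ _ _)

lemma tsum_ite_le_eq_tsum_nat_add (hf : Summable f) (K : ℕ) :
    ∑' i, (if K ≤ i then f i else 0) = ∑' n, f (n + K) := by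
  have hs : Summable fun i => if K ≤ i then f i else 0 :=
    (summable_nat_add_iff K).1 <| ((summable_nat_add_iff K).2 hf).congr fun n => by simp
  rw [← hs.sum_add_tsum_nat_add K, Finset.sum_eq_zero fun i hi => by
    simp [Finset.mem_range.1 hi]]
  simp

lemma tsum_le_sq_add_two_mul_tsum_nat_add (ht : 0 ≤ t) (hf₀ : ∀ i, 0 ≤ f i) (hf : Summable f)
    (hg₀ : ∀ p, 0 ≤ g p) (hg : ∀ p, g p ≤ min 1 (t * f p.1 * f p.2)) (K : ℕ) :
    ∑' p, g p ≤ K ^ 2 + 2 * t * (∑' n, f (n + K)) * ∑' i, f i := by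
  set a : ℕ → ℝ := fun i => if i < K then 1 else 0
  set h : ℕ → ℝ := fun i => if K ≤ i then f i else 0
  have ha₀ : ∀ i, 0 ≤ a i := fun i => by positivity
  have hh₀ : ∀ i, 0 ≤ h i := fun i => by simp only [h]; split_ifs <;> simp [hf₀]
  have has : Summable a := summable_of_ne_finset_zero (s := Finset.range K) fun i hi => by
    simp_all [a]
  have hhs : Summable h := hf.of_nonneg_of_le hh₀ fun i => by
    simp only [h]; split_ifs <;> simp [hf₀]
  have hta : ∑' i, a i = K := by
    rw [tsum_eq_sum (s := Finset.range K) fun i hi => by simp_all [a],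
      Finset.sum_congr rfl fun i hi => if_pos (Finset.mem_range.1 hi)]
    simp
  have hpt : ∀ p : ℕ × ℕ, g p ≤ a p.1 * a p.2 + t * (h p.1 * f p.2) + t * (f p.1 * h p.2) := by
    rintro ⟨i, j⟩
    have h₁ := mul_nonneg (ha₀ i) (ha₀ j)
    have h₂ := mul_nonneg ht (mul_nonneg (hh₀ i) (hf₀ j))
    have h₃ := mul_nonneg ht (mul_nonneg (hf₀ i) (hh₀ j))
    have hgt : g (i, j) ≤ t * f i * f j := (hg _).trans (min_le_right _ _)
    by_cases hi : K ≤ i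
    · have : h i = f i := if_pos hi
      rw [this]; linarith
    by_cases hj : K ≤ j
    · have : h j = f j := if_pos hj
      rw [this]; linarith
    · have : a i * a j = 1 := by simp [a, not_le.1 hi, not_le.1 hj]
      linarith [(hg (i, j)).trans (min_le_left _ _)]
  have hs₁ := has.mul_of_nonneg has ha₀ ha₀
  have hs₂ := (hhs.mul_of_nonneg hf hh₀ hf₀).mul_left t
  have hs₃ := (hf.mul_of_nonneg hhs hf₀ hh₀).mul_left t
  calc ∑' p, g p ≤ ∑' p : ℕ × ℕ, (a p.1 * a p.2 + t * (h p.1 * f p.2) + t * (f p.1 * h p.2)) :=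
        (summable_of_le_mul_mul hf₀ hf hg₀ fun p => (hg p).trans (min_le_right _ _)).tsum_le_tsum
          hpt ((hs₁.add hs₂).add hs₃)
    _ = (∑' i, a i) * (∑' i, a i) + t * ((∑' i, h i) * ∑' i, f i)
          + t * ((∑' i, f i) * ∑' i, h i) := by
        rw [(hs₁.add hs₂).tsum_add hs₃, hs₁.tsum_add hs₂, tsum_mul_left, tsum_mul_left,
          has.tsum_mul_tsum has hs₁, hhs.tsum_mul_tsum hf (hhs.mul_of_nonneg hf hh₀ hf₀),
          hf.tsum_mul_tsum hhs (hf.mul_of_nonneg hhs hf₀ hh₀)]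
    _ = K ^ 2 + 2 * t * (∑' n, f (n + K)) * ∑' i, f i := by
        rw [hta, tsum_ite_le_eq_tsum_nat_add hf K]; ring

end PairSums

section EdgeCount

variable {q : ℕ → ℝ} {c t : ℝ}

lemma edgeTerm_nonneg (ht : 0 ≤ t) (hq₀ : ∀ i, 2 ≤ i → 0 ≤ q i) (p : ℕ × ℕ) :
    0 ≤ edgeTerm q t p := by
  have := hq₀ (p.1 + 2) (by omega)
  have := hq₀ (p.2 + 2) (by omega)
  unfold edgeTerm
  split_ifs <;> positivity

lemma edgeTerm_le_min (ht : 0 ≤ t) (hq₀ : ∀ i, 2 ≤ i → 0 ≤ q i) (p : ℕ × ℕ) :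
    edgeTerm q t p ≤ min 1 (t * q (p.1 + 2) * q (p.2 + 2)) := by
  have := hq₀ (p.1 + 2) (by omega)
  have := hq₀ (p.2 + 2) (by omega)
  unfold edgeTerm
  split_ifs <;> first | exact le_rfl | positivity

lemma edgeCount_nonneg (ht : 0 ≤ t) (hq₀ : ∀ i, 2 ≤ i → 0 ≤ q i) : 0 ≤ edgeCount q t :=
  tsum_nonneg (edgeTerm_nonneg ht hq₀)

lemma edgeCount_le (hc : 0 ≤ c) (hq₀ : ∀ i, 2 ≤ i → 0 ≤ q i)
    (hqc : ∀ i, 2 ≤ i → q i ≤ c * logWeight i) (ht : 1 < t) :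
    edgeCount q t ≤ (8 + 256 * c ^ 2) * (t / log t) := by
  have hlog : 0 < log t := log_pos ht
  have hf₀ : ∀ i, 0 ≤ q (i + 2) := fun i => hq₀ _ (by omega)
  have hfc : ∀ i, q (i + 2) ≤ c * logWeight (i + 2) := fun i => hqc _ (by omega)
  have hf : Summable fun i => q (i + 2) := summable_of_le_mul_logWeight hf₀ hfc
  set s := √√t
  have hs1 : 1 ≤ s := one_le_sqrt.2 (one_le_sqrt.2 ht.le)
  have hss : s ^ 2 = √t := sq_sqrt (sqrt_nonneg t)
  set K := ⌈s⌉₊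
  have hK : (K : ℝ) ^ 2 ≤ 8 * (t / log t) := by
    have : (K : ℝ) ≤ 2 * s := by linarith [Nat.ceil_lt_add_one (by positivity : 0 ≤ s)]
    nlinarith [sqrt_le_two_mul_div_log ht]
  have hlogK : log t / 4 ≤ log (K + 2 : ℕ) := by
    have : log s = log t / 4 := by
      rw [log_sqrt (sqrt_nonneg t), log_sqrt (by linarith)]; ring
    rw [← this]
    exact log_le_log (by positivity) (by push_cast; linarith [Nat.le_ceil s])
  have hT : ∑' n, q (n + K + 2) ≤ 16 * c / log t :=
    calc ∑' n, q (n + K + 2) ≤ 4 * c / log (K + 2 : ℕ) :=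
          tsum_le_of_le_mul_logWeight (by omega) hc (fun n => hf₀ _) (fun n => hfc (n + K))
      _ ≤ 4 * c / (log t / 4) := by gcongr
      _ = 16 * c / log t := by field_simp; ring
  have hS : ∑' i, q (i + 2) ≤ 8 * c :=
    calc ∑' i, q (i + 2) ≤ 4 * c / log (2 : ℕ) := tsum_le_of_le_mul_logWeight le_rfl hc hf₀ hfc
      _ ≤ 8 * c := by
          rw [div_le_iff₀ (by norm_num; positivity)]
          push_cast
          nlinarith [log_two_gt_d9]
  calc edgeCount q t ≤ K ^ 2 + 2 * t * (∑' n, q (n + K + 2)) * ∑' i, q (i + 2) := by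
        exact tsum_le_sq_add_two_mul_tsum_nat_add (by linarith) hf₀ hf
          (edgeTerm_nonneg (by linarith) hq₀) (edgeTerm_le_min (by linarith) hq₀) K
    _ ≤ 8 * (t / log t) + 2 * t * (16 * c / log t) * (8 * c) := by
        gcongr
        · exact tsum_nonneg fun n => hf₀ _
    _ = (8 + 256 * c ^ 2) * (t / log t) := by ring

lemma vertexCount_sub_one_le_edgeCount (ht : 0 ≤ t) (hq₀ : ∀ i, 2 ≤ i → 0 ≤ q i)
    (hq : Summable fun i => q (i + 2)) :
    vertexCount (fun i => q i * q 2) t - 1 ≤ edgeCount q t := by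
  have hf₀ : ∀ i, 0 ≤ q (i + 2) := fun i => hq₀ _ (by omega)
  set v := fun i => min 1 (t * (q (i + 2) * q 2))
  have hv₀ : ∀ i, 0 ≤ v i := fun i =>
    le_min zero_le_one (by have := hf₀ i; have := hf₀ 0; positivity)
  have hvs : Summable v :=
    ((hq.mul_right (q 2)).mul_left t).of_nonneg_of_le hv₀ fun i => min_le_right _ _
  have hFs : Summable (edgeTerm q t) := summable_of_le_mul_mul hf₀ hq (edgeTerm_nonneg ht hq₀)
    fun p => (edgeTerm_le_min ht hq₀ p).trans (min_le_right _ _)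
  have hinj : Function.Injective fun n : ℕ => (n + 1, 0) := fun m n h => by simpa using h
  calc vertexCount (fun i => q i * q 2) t - 1 ≤ ∑' n, v (n + 1) := by
        rw [vertexCount, hvs.tsum_eq_zero_add]
        linarith [min_le_left 1 (t * (q 2 * q 2))]
    _ = ∑' n, edgeTerm q t (n + 1, 0) := tsum_congr fun n => by simp [v, edgeTerm, mul_assoc]
    _ ≤ edgeCount q t := tsum_comp_le_tsum_of_inj hFs (edgeTerm_nonneg ht hq₀) hinj

end EdgeCount

namespace Asymptotics

variable {α : Type*} {l : Filter α} {f g : α → ℝ}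

lemma isTheta_of_eventually_bounds {c C : ℝ} (hc : 0 < c) (hg : ∀ᶠ x in l, 0 ≤ g x)
    (hlo : ∀ᶠ x in l, c * g x ≤ f x) (hhi : ∀ᶠ x in l, f x ≤ C * g x) : f =Θ[l] g := by
  refine ⟨.of_bound C ?_, .of_bound c⁻¹ ?_⟩ <;> filter_upwards [hg, hlo, hhi] with x hg hlo hhi
  · rw [norm_of_nonneg (by nlinarith : 0 ≤ f x), norm_of_nonneg hg]; exact hhi
  · rw [norm_of_nonneg (by nlinarith : 0 ≤ f x), norm_of_nonneg hg, le_inv_mul_iff₀ hc]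
    exact hlo

lemma IsBigO.eventually_le_mul (h : f =O[l] g) (hg : ∀ᶠ x in l, 0 ≤ g x) :
    ∀ᶠ C in atTop, ∀ᶠ x in l, f x ≤ C * g x := by
  obtain ⟨C₀, hC₀⟩ := h.bound
  filter_upwards [eventually_ge_atTop C₀] with C hC
  filter_upwards [hC₀, hg] with x hx hg
  rw [norm_of_nonneg hg] at hx
  exact (le_abs_self _).trans (hx.trans (by gcongr))

lemma IsTheta.eventually_bounds (h : f =Θ[l] g) (hf : ∀ᶠ x in l, 0 ≤ f x)
    (hg : ∀ᶠ x in l, 0 ≤ g x) :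
    ∀ᶠ c in 𝓝[>] 0, ∀ᶠ C in atTop, ∀ᶠ x in l, c * g x ≤ f x ∧ f x ≤ C * g x := by
  filter_upwards [self_mem_nhdsWithin,
    tendsto_inv_nhdsGT_zero.eventually (h.symm.isBigO.eventually_le_mul hf)] with c hc hlo
  filter_upwards [h.isBigO.eventually_le_mul hg] with C hhi
  filter_upwards [hlo, hhi] with x hlo hhi
  exact ⟨(le_inv_mul_iff₀ hc).1 hlo, hhi⟩

end Asymptotics

lemma eventually_div_log_nonneg : ∀ᶠ t in atTop, 0 ≤ t / log t := by
  filter_upwards [eventually_ge_atTop 1] with t ht using div_nonneg (by linarith) (log_nonneg ht)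

theorem isTheta_vertexCount {r : ℕ → ℝ} {a b : ℝ} (ha : 0 < a)
    (hra : ∀ i, 2 ≤ i → a * logWeight i ≤ r i) (hrb : ∀ i, 2 ≤ i → r i ≤ b * logWeight i) :
    vertexCount r =Θ[atTop] fun t => t / log t := by
  have hb : 0 ≤ b := by
    have hW : 0 < logWeight 2 := by unfold logWeight; positivity
    linarith [le_of_mul_le_mul_right ((hra 2 le_rfl).trans (hrb 2 le_rfl)) hW]
  have hr₀ : ∀ i, 2 ≤ i → 0 ≤ r i := fun i hi =>
    (mul_nonneg ha.le (logWeight_nonneg i)).trans (hra i hi)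
  refine isTheta_of_eventually_bounds (C := 3 + 8 * b) (half_pos ha) eventually_div_log_nonneg ?_ ?_
  · filter_upwards [eventually_ge_atTop (b + 4)] with t ht
      using mul_div_log_le_vertexCount ha.le hb hra hrb ht
  · filter_upwards [eventually_gt_atTop 1] with t ht using vertexCount_le hb hr₀ hrb ht

theorem isTheta_edgeCount {q : ℕ → ℝ} {c₁ c₂ : ℝ} (hc₁ : 0 < c₁)
    (hq₁ : ∀ i, 2 ≤ i → c₁ * logWeight i ≤ q i) (hq₂ : ∀ i, 2 ≤ i → q i ≤ c₂ * logWeight i) :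
    edgeCount q =Θ[atTop] fun t => t / log t := by
  have hW : 0 < logWeight 2 := by unfold logWeight; positivity
  have hc₂ : 0 ≤ c₂ := by
    linarith [le_of_mul_le_mul_right ((hq₁ 2 le_rfl).trans (hq₂ 2 le_rfl)) hW]
  have hq₀ : ∀ i, 2 ≤ i → 0 ≤ q i := fun i hi =>
    (mul_nonneg hc₁.le (logWeight_nonneg i)).trans (hq₁ i hi)
  have hq2 : 0 < q 2 := (mul_pos hc₁ hW).trans_le (hq₁ 2 le_rfl)
  have hq : Summable fun i => q (i + 2) :=
    summable_of_le_mul_logWeight (fun i => hq₀ _ (by omega)) fun i => hq₂ _ (by omega)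
  -- the star around vertex `2` already has `≍ t / log t` edges
  have hr₁ : ∀ i, 2 ≤ i → c₁ * q 2 * logWeight i ≤ q i * q 2 := fun i hi => by
    rw [mul_right_comm]; exact mul_le_mul_of_nonneg_right (hq₁ i hi) hq2.le
  have hr₂ : ∀ i, 2 ≤ i → q i * q 2 ≤ c₂ * q 2 * logWeight i := fun i hi => by
    rw [mul_right_comm]; exact mul_le_mul_of_nonneg_right (hq₂ i hi) hq2.le
  refine isTheta_of_eventually_bounds (c := c₁ * q 2 / 4) (C := 8 + 256 * c₂ ^ 2) (by positivity)
    eventually_div_log_nonneg ?_ ?_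
  · filter_upwards [eventually_ge_atTop (c₂ * q 2 + 4), eventually_ge_atTop 0,
      tendsto_div_log_atTop.eventually_ge_atTop (4 / (c₁ * q 2))] with t ht ht₀ htlog
    have hv := mul_div_log_le_vertexCount (by positivity) (by positivity) hr₁ hr₂ ht
    have he := vertexCount_sub_one_le_edgeCount ht₀ hq₀ hq
    have : 1 ≤ c₁ * q 2 / 4 * (t / log t) := by
      rw [div_le_iff₀ (by positivity)] at htlog; linarith
    linarith
  · filter_upwards [eventually_gt_atTop 1] with t ht using edgeCount_le hc₂ hq₀ hq₂ ht

theorem stmt15_general (c₁ c₂ : ℝ) (hc₁ : 0 < c₁) (q : ℕ → ℝ)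
    (hq : ∀ i : ℕ, 2 ≤ i → c₁ / ((i : ℝ) * (Real.log i) ^ 2) ≤ q i ∧
        q i ≤ c₂ / ((i : ℝ) * (Real.log i) ^ 2)) :
    ∃ c C t₀ : ℝ, 0 < c ∧ 0 < C ∧ ∀ t : ℝ, t₀ ≤ t →
      (c * (t / Real.log t) ≤ (∑' i : ℕ, min 1 (t * q (i + 2))) ∧
        (∑' i : ℕ, min 1 (t * q (i + 2))) ≤ C * (t / Real.log t)) ∧
      (c * (t / Real.log t)
          ≤ (∑' p : ℕ × ℕ, if p.1 ≠ p.2 then min 1 (t * q (p.1 + 2) * q (p.2 + 2)) else 0) ∧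
        (∑' p : ℕ × ℕ, if p.1 ≠ p.2 then min 1 (t * q (p.1 + 2) * q (p.2 + 2)) else 0)
          ≤ C * (t / Real.log t)) ∧
      (c * (∑' i : ℕ, min 1 (t * q (i + 2)))
          ≤ (∑' p : ℕ × ℕ, if p.1 ≠ p.2 then min 1 (t * q (p.1 + 2) * q (p.2 + 2)) else 0) ∧
        (∑' p : ℕ × ℕ, if p.1 ≠ p.2 then min 1 (t * q (p.1 + 2) * q (p.2 + 2)) else 0)
          ≤ C * (∑' i : ℕ, min 1 (t * q (i + 2)))) := by
  have hq₁ : ∀ i, 2 ≤ i → c₁ * logWeight i ≤ q i := fun i hi => by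
    simpa only [logWeight, ← div_eq_mul_inv] using (hq i hi).1
  have hq₂ : ∀ i, 2 ≤ i → q i ≤ c₂ * logWeight i := fun i hi => by
    simpa only [logWeight, ← div_eq_mul_inv] using (hq i hi).2
  have hq₀ : ∀ i, 2 ≤ i → 0 ≤ q i := fun i hi =>
    (mul_nonneg hc₁.le (logWeight_nonneg i)).trans (hq₁ i hi)
  have hv₀ : ∀ᶠ t in atTop, 0 ≤ vertexCount q t := by
    filter_upwards [eventually_ge_atTop 0] with t ht using vertexCount_nonneg ht hq₀
  have he₀ : ∀ᶠ t in atTop, 0 ≤ edgeCount q t := by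
    filter_upwards [eventually_ge_atTop 0] with t ht using edgeCount_nonneg ht hq₀
  have hv := isTheta_vertexCount hc₁ hq₁ hq₂
  have he := isTheta_edgeCount hc₁ hq₁ hq₂
  obtain ⟨c, ⟨hvC, heC, hevC⟩, hc⟩ := (((hv.eventually_bounds hv₀ eventually_div_log_nonneg).and
      ((he.eventually_bounds he₀ eventually_div_log_nonneg).and
        ((he.trans hv.symm).eventually_bounds he₀ hv₀))).and self_mem_nhdsWithin).exists
  obtain ⟨C, ⟨hv', he', hev'⟩, hC⟩ := ((hvC.and (heC.and hevC)).and (eventually_gt_atTop 0)).exists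
  obtain ⟨t₀, ht₀⟩ := eventually_atTop.1 (hv'.and (he'.and hev'))
  exact ⟨c, C, t₀, hc, hC, ht₀⟩

/-- If `q i ≍ 1/(i log² i)` for `i ≥ 2`, then
`v(t) = ∑ᵢ min(1, t qᵢ) ≍ t/log t` and `e(t) = ∑_{i≠j} min(1, t qᵢ qⱼ) ≍ t/log t`
as `t → ∞`; consequently `e(t) ≍ v(t)`: the graph is extremely sparse. -/
theorem stmt15 (c₁ c₂ : ℝ) (hc₁ : 0 < c₁) (hc₂ : 0 < c₂) (q : ℕ → ℝ)
    (hq : ∀ i : ℕ, 2 ≤ i → c₁ / ((i : ℝ) * (Real.log i) ^ 2) ≤ q i ∧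
        q i ≤ c₂ / ((i : ℝ) * (Real.log i) ^ 2)) :
    ∃ c C t₀ : ℝ, 0 < c ∧ 0 < C ∧ ∀ t : ℝ, t₀ ≤ t →
      (c * (t / Real.log t) ≤ (∑' i : ℕ, min 1 (t * q (i + 2))) ∧
        (∑' i : ℕ, min 1 (t * q (i + 2))) ≤ C * (t / Real.log t)) ∧
      (c * (t / Real.log t)
          ≤ (∑' p : ℕ × ℕ, if p.1 ≠ p.2 then min 1 (t * q (p.1 + 2) * q (p.2 + 2)) else 0) ∧
        (∑' p : ℕ × ℕ, if p.1 ≠ p.2 then min 1 (t * q (p.1 + 2) * q (p.2 + 2)) else 0)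
          ≤ C * (t / Real.log t)) ∧
      (c * (∑' i : ℕ, min 1 (t * q (i + 2)))
          ≤ (∑' p : ℕ × ℕ, if p.1 ≠ p.2 then min 1 (t * q (p.1 + 2) * q (p.2 + 2)) else 0) ∧
        (∑' p : ℕ × ℕ, if p.1 ≠ p.2 then min 1 (t * q (p.1 + 2) * q (p.2 + 2)) else 0)
          ≤ C * (∑' i : ℕ, min 1 (t * q (i + 2)))) :=
  stmt15_general c₁ c₂ hc₁ q hq
end

section
/- In the edge-exchangeable model, suppose the intensity matrix satisfies $\mu_{ij} > 0$ for some pair where $i$ or $j$ indexes a blip label (i.e., the model contains dust or attached stars: $\mu_{0i} > 0$ for some $i$). Then almost surely $v(G_m) \asymp m$ and $e(G_m) \asymp m$ as $m \to \infty$; i.e., the number of vertices and edges grows linearly in the number of sampled edges, so the graphs are extremely sparse. Moreover, all but a fraction $o(1)$ of edges and vertices lie in the dust or attached stars. -/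
open MeasureTheory ProbabilityTheory Filter Finset Topology
open scoped ENNReal

/-! Edges with a blip endpoint are fresh and pairwise disjoint, so they contribute one edge and one or two vertices each; by the strong law of large
numbers a positive fraction `ν {blip}` of the first `m` edges are blip edges, giving the linear
lower bounds, while the trivial bound of two vertices per edge gives the upper ones. The central
part is spanned by the distinct values among `Y 0, …, Y (m-1)`, and an i.i.d. sequence in a
countable space takes only `o(m)` distinct values: if a finite set `F` carries all but `ε` of
the mass of `ν`, the strong law leaves at most `(ε + o(1)) m` samples outside `F`, so there are
at most `#F + (ε + o(1)) m` distinct values. -/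

theorem MeasureTheory.Measure.tendsto_measure_compl_finset_atTop {α : Type*} [MeasurableSpace α]
    [Countable α] [MeasurableSingletonClass α] (ν : Measure α) [IsFiniteMeasure ν] :
    Tendsto (fun F : Finset α => ν (↑F)ᶜ) atTop (𝓝 0) := by
  have hempty : ⋂ F : Finset α, (↑F : Set α)ᶜ = ∅ :=
    Set.eq_empty_of_forall_notMem fun a ha =>
      Set.mem_iInter.1 ha {a} (Finset.mem_coe.2 (Finset.mem_singleton_self a))
  have h := tendsto_measure_iInter_atTop (μ := ν)
    (fun F : Finset α => F.measurableSet.compl.nullMeasurableSet)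
    (fun _ _ hFG => Set.compl_subset_compl.2 (Finset.coe_subset.2 hFG))
    ⟨∅, measure_ne_top ν _⟩
  rwa [hempty, measure_empty] at h

theorem Finset.card_image_le_card_add_card_filter_notMem {ι α : Type*} [DecidableEq α]
    (s : Finset ι) (f : ι → α) (F : Finset α) :
    #(s.image f) ≤ #F + #{i ∈ s | f i ∉ F} :=
  calc #(s.image f) ≤ #(F ∪ {i ∈ s | f i ∉ F}.image f) := by
        refine card_le_card fun a ha => ?_
        obtain ⟨i, hi, rfl⟩ := mem_image.1 ha
        by_cases hiF : f i ∈ F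
        · exact mem_union_left _ hiF
        · exact mem_union_right _ (mem_image_of_mem f (mem_filter.2 ⟨hi, hiF⟩))
    _ ≤ #F + #{i ∈ s | f i ∉ F} := (card_union_le _ _).trans (by gcongr; exact card_image_le)

section Frequencies

variable {α : Type*} [MeasurableSpace α] {Ω : Type*} [MeasurableSpace Ω]

theorem ProbabilityTheory.tendsto_card_filter_range_div_ae {P : Measure Ω} [IsFiniteMeasure P]
    {ν : Measure α} {Y : ℕ → Ω → α} (hY : ∀ i, Measurable (Y i)) (hind : iIndepFun Y P)
    (hdist : ∀ i, P.map (Y i) = ν) {p : α → Prop} [DecidablePred p]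
    (hp : MeasurableSet {a | p a}) :
    ∀ᵐ ω ∂P, Tendsto (fun m : ℕ => (#{i ∈ range m | p (Y i ω)} : ℝ) / m) atTop
      (𝓝 (ν {a | p a}).toReal) := by
  set f : α → ℝ := {a | p a}.indicator 1
  have hf : Measurable f := measurable_const.indicator hp
  have hint : Integrable (f ∘ Y 0) P :=
    (integrable_const 1).indicator (hp.preimage (hY 0))
  have hident : ∀ i, IdentDistrib (f ∘ Y i) (f ∘ Y 0) P P := fun i =>
    ⟨(hf.comp (hY i)).aemeasurable, (hf.comp (hY 0)).aemeasurable, by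
      rw [← Measure.map_map hf (hY i), ← Measure.map_map hf (hY 0), hdist i, hdist 0]⟩
  have hmean : P[f ∘ Y 0] = (ν {a | p a}).toReal := by
    rw [Function.comp_def, ← integral_map (hY 0).aemeasurable hf.aestronglyMeasurable,
      hdist 0]
    exact integral_indicator_one hp
  filter_upwards [strong_law_ae_real _ hint
    (fun i j hij => (hind.indepFun hij).comp hf hf) hident] with ω hω
  rw [hmean] at hω
  refine hω.congr fun m => ?_
  simp only [natCast_card_filter, f, Function.comp_apply, Set.indicator_apply,
    Set.mem_ofPred_eq, Pi.one_apply]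

theorem tendsto_card_image_range_div_atTop_zero [Countable α] [MeasurableSingletonClass α]
    (ν : Measure α) [IsFiniteMeasure ν] [DecidableEq α] (x : ℕ → α)
    (hfreq : ∀ F : Finset α,
      Tendsto (fun m : ℕ => (#{i ∈ range m | x i ∉ F} : ℝ) / m) atTop (𝓝 (ν (↑F)ᶜ).toReal)) :
    Tendsto (fun m : ℕ => (#((range m).image x) : ℝ) / m) atTop (𝓝 0) := by
  refine tendsto_order.2 ⟨fun a ha => .of_forall fun m => ha.trans_le (by positivity),
    fun ε hε => ?_⟩
  obtain ⟨F, hF⟩ : ∃ F : Finset α, (ν (↑F)ᶜ).toReal < ε :=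
    (((ENNReal.tendsto_toReal ENNReal.zero_ne_top).comp
      ν.tendsto_measure_compl_finset_atTop).eventually_lt_const hε).exists
  have hbound := (tendsto_const_div_atTop_nhds_zero_nat (#F : ℝ)).add (hfreq F)
  rw [zero_add] at hbound
  filter_upwards [hbound.eventually_lt_const hF] with m hm
  refine lt_of_le_of_lt ?_ hm
  rw [← add_div]
  gcongr
  exact_mod_cast card_image_le_card_add_card_filter_notMem _ x F

theorem ProbabilityTheory.tendsto_card_image_range_div_atTop_zero_ae [Countable α]
    [MeasurableSingletonClass α] [DecidableEq α] {P : Measure Ω} [IsFiniteMeasure P]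
    (ν : Measure α) [IsFiniteMeasure ν] {Y : ℕ → Ω → α} (hY : ∀ i, Measurable (Y i))
    (hind : iIndepFun Y P) (hdist : ∀ i, P.map (Y i) = ν) :
    ∀ᵐ ω ∂P,
      Tendsto (fun m : ℕ => (#((range m).image (Y · ω)) : ℝ) / m) atTop (𝓝 0) := by
  filter_upwards [ae_all_iff.2 fun F : Finset α =>
    tendsto_card_filter_range_div_ae hY hind hdist (p := (· ∉ F)) F.measurableSet.compl]
    with ω hω
  exact tendsto_card_image_range_div_atTop_zero ν _ hω

end Frequencies

section Counting

variable {ι α β : Type*}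

theorem Finset.card_filter_or_le_sum_ite (s : Finset ι) (p q : ι → Prop)
    [DecidablePred p] [DecidablePred q] :
    #{i ∈ s | p i ∨ q i} ≤ ∑ i ∈ s, ((if p i then 1 else 0) + (if q i then 1 else 0)) := by
  rw [card_filter]
  gcongr with i
  split_ifs <;> simp_all

theorem Finset.sum_ite_add_ite_le_two_mul_card (s : Finset ι) (p q : ι → Prop)
    [DecidablePred p] [DecidablePred q] :
    ∑ i ∈ s, ((if p i then 1 else 0) + (if q i then 1 else 0)) ≤ 2 * #s :=
  calc _ ≤ ∑ _i ∈ s, 2 := sum_le_sum fun i _ => by split_ifs <;> norm_num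
    _ = 2 * #s := by rw [sum_const, smul_eq_mul, mul_comm]

theorem Set.ncard_le_card_image_range [DecidableEq α] {y : ℕ → α} {g : α → β} {m : ℕ}
    {S : Set β} (hS : S ⊆ {b | ∃ i < m, b = g (y i)}) :
    S.ncard ≤ #((Finset.range m).image y) := by
  classical
  calc S.ncard ≤ (↑(((Finset.range m).image y).image g) : Set β).ncard := by
        refine Set.ncard_le_ncard (fun b hb => ?_) (Finset.finite_toSet _)
        obtain ⟨i, hi, rfl⟩ := hS hb
        simpa using ⟨i, hi, rfl⟩
    _ = #(((Finset.range m).image y).image g) := Set.ncard_coe_finset _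
    _ ≤ #((Finset.range m).image y) := Finset.card_image_le

theorem Set.ncard_le_two_mul_card_image_range [DecidableEq β] {y : ℕ → β × β} {m : ℕ}
    {S : Set β} (hS : S ⊆ {k | ∃ i < m, (y i).1 = k ∨ (y i).2 = k}) :
    S.ncard ≤ 2 * #((Finset.range m).image y) := by
  set I := (Finset.range m).image y
  calc S.ncard ≤ (↑(I.image Prod.fst ∪ I.image Prod.snd) : Set β).ncard := by
        refine Set.ncard_le_ncard (fun k hk => ?_) (Finset.finite_toSet _)
        obtain ⟨i, hi, rfl | rfl⟩ := hS hk
        · exact Finset.mem_coe.2 (Finset.mem_union_left _ (Finset.mem_image_of_mem _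
            (Finset.mem_image_of_mem y (Finset.mem_range.2 hi))))
        · exact Finset.mem_coe.2 (Finset.mem_union_right _ (Finset.mem_image_of_mem _
            (Finset.mem_image_of_mem y (Finset.mem_range.2 hi))))
    _ = #(I.image Prod.fst ∪ I.image Prod.snd) := Set.ncard_coe_finset _
    _ ≤ #(I.image Prod.fst) + #(I.image Prod.snd) := Finset.card_union_le _ _
    _ ≤ #I + #I := add_le_add Finset.card_image_le Finset.card_image_le
    _ = 2 * #I := (two_mul _).symm

end Counting

theorem blip_count_le_vertex_count_le (y : ℕ → ℤ × ℤ) (m : ℕ) :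
    #{i ∈ range m | (y i).1 ≤ 0 ∨ (y i).2 ≤ 0} ≤
        {k : ℤ | 1 ≤ k ∧ ∃ i < m, (y i).1 = k ∨ (y i).2 = k}.ncard +
          ∑ i ∈ range m,
            ((if (y i).1 ≤ 0 then 1 else 0) + (if (y i).2 ≤ 0 then 1 else 0)) ∧
      {k : ℤ | 1 ≤ k ∧ ∃ i < m, (y i).1 = k ∨ (y i).2 = k}.ncard +
          ∑ i ∈ range m,
            ((if (y i).1 ≤ 0 then 1 else 0) + (if (y i).2 ≤ 0 then 1 else 0)) ≤
        4 * m := by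
  have hlabels := Set.ncard_le_two_mul_card_image_range (y := y) (m := m)
    (S := {k : ℤ | 1 ≤ k ∧ ∃ i < m, (y i).1 = k ∨ (y i).2 = k}) fun _ hk => hk.2
  have hdistinct : #((range m).image y) ≤ m := card_image_le.trans (card_range m).le
  have hblips := card_filter_or_le_sum_ite (range m) (fun i => (y i).1 ≤ 0)
    (fun i => (y i).2 ≤ 0)
  have hsum := sum_ite_add_ite_le_two_mul_card (range m) (fun i => (y i).1 ≤ 0)
    (fun i => (y i).2 ≤ 0)
  rw [card_range] at hsum
  omega

theorem Filter.Tendsto.eventually_mul_le_of_lt {u : ℕ → ℝ} {c d : ℝ}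
    (h : Tendsto (fun m : ℕ => u m / m) atTop (𝓝 d)) (hc : c < d) :
    ∀ᶠ m : ℕ in atTop, c * m ≤ u m := by
  filter_upwards [h.eventually_const_lt hc, eventually_gt_atTop 0] with m hm hm0
  exact (le_div_iff₀ (by exact_mod_cast hm0)).1 hm.le

theorem tendsto_natCast_div_atTop_zero_of_le_mul {a b : ℕ → ℕ} {k : ℕ}
    (hab : ∀ m, a m ≤ k * b m) (hb : Tendsto (fun m : ℕ => (b m : ℝ) / m) atTop (𝓝 0)) :
    Tendsto (fun m : ℕ => (a m : ℝ) / m) atTop (𝓝 0) := by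
  refine squeeze_zero (fun _ => by positivity) (fun m => ?_)
    (by simpa using hb.const_mul (k : ℝ))
  rw [← mul_div_assoc]
  gcongr
  exact_mod_cast hab m

theorem stmt16_general {Ω : Type*} [MeasurableSpace Ω] (P : Measure Ω) [IsProbabilityMeasure P]
    (ν : Measure (ℤ × ℤ)) [IsProbabilityMeasure ν]
    (Y : ℕ → Ω → ℤ × ℤ) (hYmeas : ∀ i, Measurable (Y i))
    (hiid : iIndepFun Y P)
    (hdist : ∀ i, Measure.map (Y i) P = ν)
    (hDust : 0 < ν {p : ℤ × ℤ | p.1 ≤ 0 ∨ p.2 ≤ 0})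
    (v e centralE centralV : ℕ → Ω → ℕ)
    (hv : ∀ m ω, v m ω =
        Set.ncard {k : ℤ | 1 ≤ k ∧ ∃ i < m, (Y i ω).1 = k ∨ (Y i ω).2 = k} +
        ∑ i ∈ Finset.range m,
          ((if (Y i ω).1 ≤ 0 then 1 else 0) + (if (Y i ω).2 ≤ 0 then 1 else 0)))
    (hcE : ∀ m ω, centralE m ω =
        Set.ncard {s : Sym2 ℤ | (∀ x ∈ s, 1 ≤ x) ∧ ∃ i < m, s = Sym2.mk (Y i ω).1 (Y i ω).2})
    (he : ∀ m ω, e m ω = centralE m ω +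
        ((Finset.range m).filter (fun i => (Y i ω).1 ≤ 0 ∨ (Y i ω).2 ≤ 0)).card)
    (hcV : ∀ m ω, centralV m ω =
        Set.ncard {k : ℤ | 1 ≤ k ∧ ∃ i < m,
          (1 ≤ (Y i ω).1 ∧ 1 ≤ (Y i ω).2) ∧ ((Y i ω).1 = k ∨ (Y i ω).2 = k)}) :
    ∀ᵐ ω ∂P,
      (∃ c C : ℝ, 0 < c ∧ 0 < C ∧ ∀ᶠ m : ℕ in atTop,
        c * m ≤ (v m ω : ℝ) ∧ (v m ω : ℝ) ≤ C * m ∧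
        c * m ≤ (e m ω : ℝ) ∧ (e m ω : ℝ) ≤ C * m) ∧
      Tendsto (fun m : ℕ => (centralE m ω : ℝ) / m) atTop (nhds 0) ∧
      Tendsto (fun m : ℕ => (centralV m ω : ℝ) / m) atTop (nhds 0) := by
  filter_upwards [tendsto_card_filter_range_div_ae hYmeas hiid hdist
      (p := fun q : ℤ × ℤ => q.1 ≤ 0 ∨ q.2 ≤ 0) (Set.to_countable _).measurableSet,
    tendsto_card_image_range_div_atTop_zero_ae ν hYmeas hiid hdist] with ω hblip hdistinct
  have hN m : #((range m).image (Y · ω)) ≤ m := card_image_le.trans (card_range m).le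
  have hcE_le m : centralE m ω ≤ 1 * #((range m).image (Y · ω)) := by
    rw [hcE, one_mul]
    exact Set.ncard_le_card_image_range (g := fun p => Sym2.mk p.1 p.2)
      fun _ ⟨_, i, hi, hs⟩ => ⟨i, hi, hs⟩
  have hcV_le m : centralV m ω ≤ 2 * #((range m).image (Y · ω)) := hcV m ω ▸
    Set.ncard_le_two_mul_card_image_range fun _ ⟨_, i, hi, _, hk⟩ => ⟨i, hi, hk⟩
  have hblip_pos : 0 < (ν {p : ℤ × ℤ | p.1 ≤ 0 ∨ p.2 ≤ 0}).toReal :=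
    ENNReal.toReal_pos hDust.ne' (measure_ne_top ν _)
  refine ⟨⟨_, 4, half_pos hblip_pos, four_pos, ?_⟩,
    tendsto_natCast_div_atTop_zero_of_le_mul hcE_le hdistinct,
    tendsto_natCast_div_atTop_zero_of_le_mul hcV_le hdistinct⟩
  filter_upwards [hblip.eventually_mul_le_of_lt (half_lt_self hblip_pos)] with m hm
  have hv_bounds := hv m ω ▸ blip_count_le_vertex_count_le (Y · ω) m
  have he_def := he m ω
  have hblips_le := (card_filter_le (range m) fun i => (Y i ω).1 ≤ 0 ∨ (Y i ω).2 ≤ 0).trans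
    (card_range m).le
  have hcE_bound := hcE_le m
  have hdistinct_le := hN m
  refine ⟨hm.trans ?_, ?_, hm.trans ?_, ?_⟩ <;> norm_cast <;> omega

/-- In the edge-exchangeable model with i.i.d. edges `Y i` with labels in `ℤ`
(labels `≤ 0` are blips, replaced by fresh degree-one vertices), no loops, and positive
probability of dust/attached-star edges (an endpoint `≤ 0`): almost surely
`v(G_m) ≍ m` and `e(G_m) ≍ m` as `m → ∞` (extremely sparse), and all but an `o(1)`
fraction of edges and vertices lie in the dust or attached stars (the central part
contributes `o(m)` edges and vertices). -/
theorem stmt16 {Ω : Type*} [MeasurableSpace Ω] (P : Measure Ω) [IsProbabilityMeasure P]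
    (ν : Measure (ℤ × ℤ)) [IsProbabilityMeasure ν]
    (Y : ℕ → Ω → ℤ × ℤ) (hYmeas : ∀ i, Measurable (Y i))
    (hiid : iIndepFun Y P)
    (hdist : ∀ i, Measure.map (Y i) P = ν)
    (hNoLoop : ν {p : ℤ × ℤ | p.1 = p.2} = 0)
    (hDust : 0 < ν {p : ℤ × ℤ | p.1 ≤ 0 ∨ p.2 ≤ 0})
    (v e centralE centralV : ℕ → Ω → ℕ)
    (hv : ∀ m ω, v m ω =
        Set.ncard {k : ℤ | 1 ≤ k ∧ ∃ i < m, (Y i ω).1 = k ∨ (Y i ω).2 = k} +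
        ∑ i ∈ Finset.range m,
          ((if (Y i ω).1 ≤ 0 then 1 else 0) + (if (Y i ω).2 ≤ 0 then 1 else 0)))
    (hcE : ∀ m ω, centralE m ω =
        Set.ncard {s : Sym2 ℤ | (∀ x ∈ s, 1 ≤ x) ∧ ∃ i < m, s = Sym2.mk (Y i ω).1 (Y i ω).2})
    (he : ∀ m ω, e m ω = centralE m ω +
        ((Finset.range m).filter (fun i => (Y i ω).1 ≤ 0 ∨ (Y i ω).2 ≤ 0)).card)
    (hcV : ∀ m ω, centralV m ω =
        Set.ncard {k : ℤ | 1 ≤ k ∧ ∃ i < m,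
          (1 ≤ (Y i ω).1 ∧ 1 ≤ (Y i ω).2) ∧ ((Y i ω).1 = k ∨ (Y i ω).2 = k)}) :
    ∀ᵐ ω ∂P,
      (∃ c C : ℝ, 0 < c ∧ 0 < C ∧ ∀ᶠ m : ℕ in atTop,
        c * m ≤ (v m ω : ℝ) ∧ (v m ω : ℝ) ≤ C * m ∧
        c * m ≤ (e m ω : ℝ) ∧ (e m ω : ℝ) ≤ C * m) ∧
      Tendsto (fun m : ℕ => (centralE m ω : ℝ) / m) atTop (nhds 0) ∧
      Tendsto (fun m : ℕ => (centralV m ω : ℝ) / m) atTop (nhds 0) :=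
  stmt16_general P ν Y hYmeas hiid hdist hDust v e centralE centralV hv hcE he hcV
end
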